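/- arXiv:1511.07556 — 12 statements merged into one kernel-verified Lean document; each statement's English description precedes it below -/
import Mathlib

section
/- Let b and c be real numbers with c ≥ 0 and define f₁ on the open interval (0,1) by f₁(λ) = b + (1−λ)·log(1 + c·λ/(1−λ)). Then f₁ is concave on (0,1); moreover, if c > 0 then f₁ is strictly concave on (0,1). -/
private lemma f1_hasDerivAt (b c : ℝ) (hc : 0 ≤ c) {x : ℝ} (hx : x ∈ Set.Ioo (0:ℝ) 1) :
    HasDerivAt (fun lam : ℝ => b + (1 - lam) * Real.log (1 + c * lam / (1 - lam)))
      (-Real.log (1 + c * x / (1 - x)) + c / (1 + (c - 1) * x)) x := by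
  obtain ⟨hx0, hx1⟩ := hx
  have hu : (0:ℝ) < 1 - x := by linarith
  have hA : (0:ℝ) < 1 + (c - 1) * x := by nlinarith
  have hg : (0:ℝ) < 1 + c * x / (1 - x) := by
    have : 0 ≤ c * x / (1 - x) := by positivity
    linarith
  have h1 : HasDerivAt (fun lam : ℝ => c * lam) c x := by
    simpa using (hasDerivAt_id x).const_mul c
  have h2 : HasDerivAt (fun lam : ℝ => 1 - lam) (-1) x := by
    simpa using (hasDerivAt_id x).const_sub 1
  have h3 : HasDerivAt (fun lam : ℝ => c * lam / (1 - lam))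
      ((c * (1 - x) - c * x * (-1)) / (1 - x) ^ 2) x := h1.div h2 hu.ne'
  have h4 : HasDerivAt (fun lam : ℝ => 1 + c * lam / (1 - lam))
      ((c * (1 - x) - c * x * (-1)) / (1 - x) ^ 2) x := h3.const_add 1
  have h5 : HasDerivAt (fun lam : ℝ => Real.log (1 + c * lam / (1 - lam)))
      ((1 + c * x / (1 - x))⁻¹ * ((c * (1 - x) - c * x * (-1)) / (1 - x) ^ 2)) x :=
    (Real.hasDerivAt_log hg.ne').comp (h := fun lam : ℝ => 1 + c * lam / (1 - lam)) x h4
  have h6 : HasDerivAt (fun lam : ℝ => (1 - lam) * Real.log (1 + c * lam / (1 - lam)))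
      ((-1) * Real.log (1 + c * x / (1 - x)) +
        (1 - x) * ((1 + c * x / (1 - x))⁻¹ * ((c * (1 - x) - c * x * (-1)) / (1 - x) ^ 2))) x :=
    h2.mul h5
  have h7 := h6.const_add b
  refine HasDerivAt.congr_deriv h7 ?_
  have hgu : (1 + c * x / (1 - x)) * (1 - x) = 1 + (c - 1) * x := by
    field_simp; ring
  rw [show (1 + c * x / (1 - x)) = (1 + (c - 1) * x) / (1 - x) by field_simp; ring]
  field_simp
  ring

private lemma f1_hasDerivAt2 (c : ℝ) (hc : 0 ≤ c) {x : ℝ} (hx : x ∈ Set.Ioo (0:ℝ) 1) :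
    HasDerivAt (fun lam : ℝ => -Real.log (1 + c * lam / (1 - lam)) + c / (1 + (c - 1) * lam))
      (-(c ^ 2) / ((1 - x) * (1 + (c - 1) * x) ^ 2)) x := by
  obtain ⟨hx0, hx1⟩ := hx
  have hu : (0:ℝ) < 1 - x := by linarith
  have hA : (0:ℝ) < 1 + (c - 1) * x := by nlinarith
  have hg : (0:ℝ) < 1 + c * x / (1 - x) := by
    have : 0 ≤ c * x / (1 - x) := by positivity
    linarith
  have h1 : HasDerivAt (fun lam : ℝ => c * lam) c x := by
    simpa using (hasDerivAt_id x).const_mul c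
  have h2 : HasDerivAt (fun lam : ℝ => 1 - lam) (-1) x := by
    simpa using (hasDerivAt_id x).const_sub 1
  have h3 : HasDerivAt (fun lam : ℝ => c * lam / (1 - lam))
      ((c * (1 - x) - c * x * (-1)) / (1 - x) ^ 2) x := h1.div h2 hu.ne'
  have h4 : HasDerivAt (fun lam : ℝ => 1 + c * lam / (1 - lam))
      ((c * (1 - x) - c * x * (-1)) / (1 - x) ^ 2) x := h3.const_add 1
  have h5 : HasDerivAt (fun lam : ℝ => -Real.log (1 + c * lam / (1 - lam)))
      (-((1 + c * x / (1 - x))⁻¹ * ((c * (1 - x) - c * x * (-1)) / (1 - x) ^ 2))) x :=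
    ((Real.hasDerivAt_log hg.ne').comp (h := fun lam : ℝ => 1 + c * lam / (1 - lam)) x h4).neg
  have h6 : HasDerivAt (fun lam : ℝ => 1 + (c - 1) * lam) (c - 1) x := by
    simpa using ((hasDerivAt_id x).const_mul (c - 1)).const_add 1
  have h7 : HasDerivAt (fun lam : ℝ => c / (1 + (c - 1) * lam))
      ((0 * (1 + (c - 1) * x) - c * (c - 1)) / (1 + (c - 1) * x) ^ 2) x :=
    (hasDerivAt_const x c).div h6 hA.ne'
  have h8 := h5.add h7
  refine HasDerivAt.congr_deriv h8 ?_
  rw [show (1 + c * x / (1 - x)) = (1 + (c - 1) * x) / (1 - x) by field_simp; ring]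
  field_simp
  ring

/-- Lemma 2: f₁(λ) = b + (1−λ)·log(1 + cλ/(1−λ)) is concave on (0,1),
and strictly concave when c > 0. -/
theorem f1_concave (b c : ℝ) (hc : 0 ≤ c) :
    ConcaveOn ℝ (Set.Ioo 0 1)
      (fun lam : ℝ => b + (1 - lam) * Real.log (1 + c * lam / (1 - lam))) ∧
    (0 < c →
      StrictConcaveOn ℝ (Set.Ioo 0 1)
        (fun lam : ℝ => b + (1 - lam) * Real.log (1 + c * lam / (1 - lam)))) := by
  set f : ℝ → ℝ := fun lam : ℝ => b + (1 - lam) * Real.log (1 + c * lam / (1 - lam)) with hf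
  have hint : interior (Set.Ioo (0:ℝ) 1) = Set.Ioo 0 1 := interior_Ioo
  have hcont : ContinuousOn f (Set.Ioo 0 1) := fun x hx =>
    (f1_hasDerivAt b c hc hx).continuousAt.continuousWithinAt
  have hderiv2 : ∀ x ∈ Set.Ioo (0:ℝ) 1,
      deriv^[2] f x = -(c ^ 2) / ((1 - x) * (1 + (c - 1) * x) ^ 2) := by
    intro x hx
    have hmem : Set.Ioo (0:ℝ) 1 ∈ nhds x := isOpen_Ioo.mem_nhds hx
    have hev : deriv f =ᶠ[nhds x]
        (fun lam : ℝ => -Real.log (1 + c * lam / (1 - lam)) + c / (1 + (c - 1) * lam)) := by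
      filter_upwards [hmem] with y hy using (f1_hasDerivAt b c hc hy).deriv
    have : deriv (deriv f) x =
        deriv (fun lam : ℝ => -Real.log (1 + c * lam / (1 - lam)) + c / (1 + (c - 1) * lam)) x :=
      hev.deriv_eq
    simp only [Function.iterate_succ, Function.iterate_zero, Function.comp, id]
    rw [this, (f1_hasDerivAt2 c hc hx).deriv]
  have hpos : ∀ x ∈ Set.Ioo (0:ℝ) 1, 0 < (1 - x) * (1 + (c - 1) * x) ^ 2 := by
    intro x hx
    obtain ⟨hx0, hx1⟩ := hx
    have hu : (0:ℝ) < 1 - x := by linarith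
    have hA : (0:ℝ) < 1 + (c - 1) * x := by nlinarith
    positivity
  constructor
  · apply concaveOn_of_deriv2_nonpos (convex_Ioo 0 1) hcont
    · rw [hint]
      exact fun x hx => (f1_hasDerivAt b c hc hx).differentiableAt.differentiableWithinAt
    · rw [hint]
      intro x hx
      have hev : deriv f =ᶠ[nhds x]
          (fun lam : ℝ => -Real.log (1 + c * lam / (1 - lam)) + c / (1 + (c - 1) * lam)) := by
        filter_upwards [isOpen_Ioo.mem_nhds hx] with y hy using (f1_hasDerivAt b c hc hy).deriv
      exact ((f1_hasDerivAt2 c hc hx).congr_of_eventuallyEq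
        hev).differentiableAt.differentiableWithinAt
    · rw [hint]
      intro x hx
      rw [hderiv2 x hx]
      have := hpos x hx
      have hc2 : 0 ≤ c ^ 2 := sq_nonneg c
      exact div_nonpos_of_nonpos_of_nonneg (by linarith) this.le
  · intro hcpos
    apply strictConcaveOn_of_deriv2_neg (convex_Ioo 0 1) hcont
    rw [hint]
    intro x hx
    rw [hderiv2 x hx]
    have := hpos x hx
    have hc2 : 0 < c ^ 2 := by positivity
    exact div_neg_of_neg_of_pos (by linarith) this
end

section
/- Let a, b, c be real numbers with a > 0, b > 0, c > 0 and define f₁ on (0,1) by f₁(λ) = b + (1−λ)·log(1 + c·λ/(1−λ)). Then the equation λ·(a+b) = f₁(λ) has exactly one solution λ₁ in the open interval (0,1). -/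
/-- The equation λ·(a+b) = f₁(λ) has exactly one solution in (0,1)
(intersection point λ₁ of Theorem 1). -/
theorem f1_unique_intersection (a b c : ℝ) (ha : 0 < a) (hb : 0 < b) (hc : 0 < c) :
    ∃! lam : ℝ, lam ∈ Set.Ioo (0 : ℝ) 1 ∧
      lam * (a + b) = b + (1 - lam) * Real.log (1 + c * lam / (1 - lam)) := by
  set G : ℝ → ℝ := fun x => x*(a+b) - b - (1-x)*(Real.log (1+(c-1)*x) - Real.log (1-x))
    with hG_def
  set G' : ℝ → ℝ := fun x => (a+b) - ((-1)*(Real.log (1+(c-1)*x) - Real.log (1-x))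
      + (1-x)*((c-1)/(1+(c-1)*x) - (-1)/(1-x))) with hG'_def
  have hp_pos : ∀ x ∈ Set.Icc (0:ℝ) 1, 0 < 1+(c-1)*x := by
    intro x hx
    rcases eq_or_lt_of_le hx.1 with h | h
    · rw [← h]; norm_num
    · nlinarith [mul_pos hc h, hx.2]
  -- equation equivalence
  have hEq : ∀ lam ∈ Set.Ioo (0:ℝ) 1,
      (lam * (a + b) = b + (1 - lam) * Real.log (1 + c * lam / (1 - lam))) ↔ G lam = 0 := by
    intro lam hlam
    have hq : (0:ℝ) < 1 - lam := by linarith [hlam.2]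
    have hp : (0:ℝ) < 1 + (c-1)*lam := hp_pos lam ⟨le_of_lt hlam.1, le_of_lt hlam.2⟩
    have h1 : 1 + c * lam / (1 - lam) = (1+(c-1)*lam)/(1-lam) := by field_simp; ring
    rw [h1, Real.log_div hp.ne' hq.ne']
    simp only [hG_def]
    constructor <;> intro h <;> linarith
  -- continuity on [0,1]
  have hcont : ContinuousOn G (Set.Icc (0:ℝ) 1) := by
    have hGrw : G = fun x => (x*(a+b) - b - (1-x)*Real.log (1+(c-1)*x))
        + (1-x)*Real.log (1-x) := by
      funext x; simp only [hG_def]; ring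
    rw [hGrw]
    have h1 : ContinuousOn (fun x : ℝ => Real.log (1+(c-1)*x)) (Set.Icc (0:ℝ) 1) :=
      ContinuousOn.log (by fun_prop) (fun x hx => (hp_pos x hx).ne')
    have h2 : Continuous (fun x : ℝ => (1-x) * Real.log (1-x)) :=
      Real.continuous_mul_log.comp (continuous_const.sub continuous_id)
    exact ((((continuous_id.mul continuous_const).continuousOn.sub
      continuous_const.continuousOn).sub
      ((continuous_const.sub continuous_id).continuousOn.mul h1)).add h2.continuousOn)
  -- first derivative
  have hderiv : ∀ x ∈ Set.Ioo (0:ℝ) 1, HasDerivAt G (G' x) x := by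
    intro x hx
    have hp : (0:ℝ) < 1+(c-1)*x := hp_pos x (Set.Ioo_subset_Icc_self hx)
    have hq : (0:ℝ) < 1 - x := by linarith [hx.2]
    have h1 : HasDerivAt (fun x : ℝ => 1+(c-1)*x) (c-1) x := by
      simpa using ((hasDerivAt_id x).const_mul (c-1)).const_add 1
    have h2 : HasDerivAt (fun x : ℝ => 1 - x) (-1) x := by
      simpa using (hasDerivAt_id x).const_sub 1
    have hlogp := h1.log hp.ne'
    have hlogq := h2.log hq.ne'
    have := (((hasDerivAt_id x).mul_const (a+b)).sub_const b).sub
      (h2.mul (hlogp.sub hlogq))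
    refine this.congr_deriv ?_
    simp only [hG'_def, Pi.sub_apply]
    ring
  -- second derivative
  have hderiv2 : ∀ x ∈ Set.Ioo (0:ℝ) 1,
      HasDerivAt G' (c^2/((1+(c-1)*x)^2*(1-x))) x := by
    intro x hx
    have hp : (0:ℝ) < 1+(c-1)*x := hp_pos x (Set.Ioo_subset_Icc_self hx)
    have hq : (0:ℝ) < 1 - x := by linarith [hx.2]
    have h1 : HasDerivAt (fun x : ℝ => 1+(c-1)*x) (c-1) x := by
      simpa using ((hasDerivAt_id x).const_mul (c-1)).const_add 1
    have h2 : HasDerivAt (fun x : ℝ => 1 - x) (-1) x := by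
      simpa using (hasDerivAt_id x).const_sub 1
    have hlogp := h1.log hp.ne'
    have hlogq := h2.log hq.ne'
    have hd1 : HasDerivAt (fun x : ℝ => (c-1)/(1+(c-1)*x))
        ((0*(1+(c-1)*x) - (c-1)*(c-1))/(1+(c-1)*x)^2) x :=
      (hasDerivAt_const x (c-1)).div h1 hp.ne'
    have hd2 : HasDerivAt (fun x : ℝ => (-1)/(1-x))
        ((0*(1-x) - (-1)*(-1))/(1-x)^2) x :=
      (hasDerivAt_const x (-1)).div h2 hq.ne'
    have := ((hasDerivAt_const x (a+b)).sub
      (((hlogp.sub hlogq).const_mul (-1)).add (h2.mul (hd1.sub hd2))))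
    refine this.congr_deriv ?_
    have hppos := hp.ne'
    have hqpos := hq.ne'
    simp only [Pi.sub_apply]
    field_simp
    ring
  -- strict convexity
  have hconv : StrictConvexOn ℝ (Set.Icc (0:ℝ) 1) G := by
    apply strictConvexOn_of_deriv2_pos (convex_Icc _ _) hcont
    intro x hx
    rw [interior_Icc] at hx
    have heq : deriv G =ᶠ[nhds x] G' := by
      filter_upwards [Ioo_mem_nhds hx.1 hx.2] with y hy using (hderiv y hy).deriv
    have h2 : deriv (deriv G) x = c^2/((1+(c-1)*x)^2*(1-x)) := by
      rw [heq.deriv_eq]; exact (hderiv2 x hx).deriv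
    have hp : (0:ℝ) < 1+(c-1)*x := hp_pos x (Set.Ioo_subset_Icc_self hx)
    have hq : (0:ℝ) < 1 - x := by linarith [hx.2]
    have : (0:ℝ) < c^2/((1+(c-1)*x)^2*(1-x)) := by positivity
    simpa [Function.iterate_succ, Function.comp, h2] using this
  -- values at endpoints
  have hG0 : G 0 = -b := by simp [hG_def]
  have hG1 : G 1 = a := by simp [hG_def]
  -- existence via IVT
  have hmem : (0:ℝ) ∈ Set.Ioo (G 0) (G 1) := by
    rw [hG0, hG1]; exact ⟨by linarith, ha⟩
  obtain ⟨lam, hlam, hGlam⟩ := intermediate_value_Ioo (by norm_num : (0:ℝ) ≤ 1) hcont hmem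
  -- uniqueness key: no two distinct zeros
  have key : ∀ u v : ℝ, u ∈ Set.Ioo (0:ℝ) 1 → v ∈ Set.Ioo (0:ℝ) 1 →
      G u = 0 → G v = 0 → u < v → False := by
    intro u v hu hv hGu hGv huv
    have hv0 : (0:ℝ) < v := hv.1
    have ht1 : 0 < 1 - u/v := by
      rw [sub_pos, div_lt_one hv0]; exact huv
    have ht2 : 0 < u/v := div_pos hu.1 hv0
    have hsum : (1 - u/v) + u/v = 1 := by ring
    have hco := hconv.2 (Set.mem_Icc.mpr ⟨le_refl 0, by norm_num⟩)
      (Set.mem_Icc.mpr ⟨le_of_lt hv0, le_of_lt hv.2⟩)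
      (by exact ne_of_lt hv0) ht1 ht2 hsum
    have hx : (1 - u/v) • (0:ℝ) + (u/v) • v = u := by
      simp only [smul_eq_mul]
      field_simp
      ring
    rw [hx] at hco
    simp only [smul_eq_mul, hGu, hGv, hG0] at hco
    nlinarith
  refine ⟨lam, ⟨hlam, (hEq lam hlam).mpr hGlam⟩, ?_⟩
  rintro y ⟨hy, hyeq⟩
  have hGy : G y = 0 := (hEq y hy).mp hyeq
  rcases lt_trichotomy y lam with h | h | h
  · exact absurd (key y lam hy hlam hGy hGlam h) (by simp)
  · exact h
  · exact absurd (key lam y hlam hy hGlam hGy h) (by simp)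
end

section
/- Let b and c be real numbers with c > 0 and define f₁ on (0,1) by f₁(λ) = b + (1−λ)·log(1 + c·λ/(1−λ)). Then there exists a unique λ₂ ∈ (0,1) such that f₁(λ) < f₁(λ₂) for every λ ∈ (0,1) with λ ≠ λ₂; that is, f₁ attains its maximum over (0,1) at a unique interior point (the stagnation point of f₁). -/
open Real Set Filter Topology

namespace F1Aux

noncomputable def psi (c x : ℝ) : ℝ :=
  c / (1 - x + c * x) - Real.log (1 - x + c * x) + Real.log (1 - x)

noncomputable def G (b c x : ℝ) : ℝ :=
  b + (1 - x) * (Real.log (1 - x + c * x) - Real.log (1 - x))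

lemma w_pos {c : ℝ} (hc : 0 < c) {x : ℝ} (hx : x ∈ Ioo (0:ℝ) 1) :
    0 < 1 - x + c * x := by nlinarith [hx.1, hx.2]

lemma G_eq {b c : ℝ} (hc : 0 < c) {x : ℝ} (hx : x ∈ Ioo (0:ℝ) 1) :
    b + (1 - x) * Real.log (1 + c * x / (1 - x)) = G b c x := by
  have hs : (0:ℝ) < 1 - x := by linarith [hx.2]
  have hw : 0 < 1 - x + c * x := w_pos hc hx
  have h1 : 1 + c * x / (1 - x) = (1 - x + c * x) / (1 - x) := by
    field_simp
  rw [G, h1, Real.log_div (ne_of_gt hw) (ne_of_gt hs)]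

lemma hasDerivAt_w (c x : ℝ) : HasDerivAt (fun y : ℝ => 1 - y + c * y) (c - 1) x := by
  have h := (((hasDerivAt_id x).const_mul c).add ((hasDerivAt_const x 1).sub (hasDerivAt_id x)))
  have heq : (fun y : ℝ => 1 - y + c * y) = fun y : ℝ => c * y + (1 - y) := by
    funext y; ring
  rw [heq]
  exact h.congr_deriv (by ring)

lemma hasDerivAt_s (x : ℝ) : HasDerivAt (fun y : ℝ => 1 - y) (-1) x := by
  have h := (hasDerivAt_const x (1:ℝ)).sub (hasDerivAt_id x)
  exact h.congr_deriv (by ring)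

lemma hasDerivAt_G {b c : ℝ} (hc : 0 < c) {x : ℝ} (hx : x ∈ Ioo (0:ℝ) 1) :
    HasDerivAt (G b c) (psi c x) x := by
  have hs : (0:ℝ) < 1 - x := by linarith [hx.2]
  have hw : 0 < 1 - x + c * x := w_pos hc hx
  have hlogw : HasDerivAt (fun y : ℝ => Real.log (1 - y + c * y)) ((c-1) / (1 - x + c * x)) x :=
    (hasDerivAt_w c x).log (ne_of_gt hw)
  have hlogs : HasDerivAt (fun y : ℝ => Real.log (1 - y)) ((-1) / (1 - x)) x :=
    (hasDerivAt_s x).log (ne_of_gt hs)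
  have h := ((hasDerivAt_s x).mul (hlogw.sub hlogs)).const_add b
  refine h.congr_deriv ?_
  simp only [Pi.sub_apply]
  rw [psi]
  have hws : (1 - x + c * x) ≠ 0 := ne_of_gt hw
  have hss : (1 - x) ≠ 0 := ne_of_gt hs
  field_simp
  linear_combination (-1:ℝ) * mul_inv_cancel₀ hws

lemma hasDerivAt_psi {c : ℝ} (hc : 0 < c) {x : ℝ} (hx : x ∈ Ioo (0:ℝ) 1) :
    HasDerivAt (psi c) (-c^2 / ((1 - x + c * x)^2 * (1 - x))) x := by
  have hs : (0:ℝ) < 1 - x := by linarith [hx.2]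
  have hw : 0 < 1 - x + c * x := w_pos hc hx
  have hinv : HasDerivAt (fun y : ℝ => (1 - y + c * y)⁻¹) (-(c-1) / (1 - x + c * x)^2) x :=
    (hasDerivAt_w c x).inv (ne_of_gt hw)
  have hlogw : HasDerivAt (fun y : ℝ => Real.log (1 - y + c * y)) ((c-1) / (1 - x + c * x)) x :=
    (hasDerivAt_w c x).log (ne_of_gt hw)
  have hlogs : HasDerivAt (fun y : ℝ => Real.log (1 - y)) ((-1) / (1 - x)) x :=
    (hasDerivAt_s x).log (ne_of_gt hs)
  have h := ((hinv.const_mul c).sub hlogw).add hlogs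
  have heq : psi c = fun y : ℝ =>
      c * (1 - y + c * y)⁻¹ - Real.log (1 - y + c * y) + Real.log (1 - y) := by
    funext y; rw [psi, div_eq_mul_inv]
  rw [heq]
  refine h.congr_deriv ?_
  have hws : (1 - x + c * x) ≠ 0 := ne_of_gt hw
  have hss : (1 - x) ≠ 0 := ne_of_gt hs
  field_simp
  ring

lemma psi_strictAnti {c : ℝ} (hc : 0 < c) : StrictAntiOn (psi c) (Ioo (0:ℝ) 1) := by
  apply strictAntiOn_of_deriv_neg (convex_Ioo 0 1)
  · intro x hx
    exact (hasDerivAt_psi hc hx).continuousAt.continuousWithinAt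
  · intro x hx
    rw [interior_Ioo] at hx
    rw [(hasDerivAt_psi hc hx).deriv]
    have hs : (0:ℝ) < 1 - x := by linarith [hx.2]
    have hw : 0 < 1 - x + c * x := w_pos hc hx
    apply div_neg_of_neg_of_pos
    · nlinarith
    · positivity

end F1Aux

open F1Aux

/-- f₁ attains its maximum over (0,1) at a unique interior point
(the stagnation point λ₂ of Theorem 1). -/
theorem f1_unique_maximizer (b c : ℝ) (hc : 0 < c) :
    ∃! lam₂ : ℝ, lam₂ ∈ Set.Ioo (0 : ℝ) 1 ∧
      ∀ lam ∈ Set.Ioo (0 : ℝ) 1, lam ≠ lam₂ →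
        b + (1 - lam) * Real.log (1 + c * lam / (1 - lam)) <
          b + (1 - lam₂) * Real.log (1 + c * lam₂ / (1 - lam₂)) := by
  -- psi is continuous at 0 with value c > 0
  have hpsi0 : ContinuousAt (psi c) 0 := by
    have h1 : ContinuousAt (fun x : ℝ => 1 - x + c * x) 0 := by fun_prop
    have hne : (1:ℝ) - 0 + c * 0 ≠ 0 := by norm_num
    have hne' : (1:ℝ) - 0 ≠ 0 := by norm_num
    have h2 : ContinuousAt (fun x : ℝ => Real.log (1 - x + c * x)) 0 :=
      ContinuousAt.log h1 hne
    have h3 : ContinuousAt (fun x : ℝ => Real.log (1 - x)) 0 :=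
      ContinuousAt.log (by fun_prop) hne'
    exact ((continuousAt_const.div h1 hne).sub h2).add h3
  have hpsi0val : psi c 0 = c := by simp [psi]
  -- a point a in (0,1) with psi a > 0
  have hmem0 : Ioo (0:ℝ) 1 ∈ 𝓝[>] (0:ℝ) :=
    Ioo_mem_nhdsGT_of_mem (by constructor <;> norm_num)
  have hev0 : ∀ᶠ x in 𝓝[>] (0:ℝ), 0 < psi c x := by
    have : ∀ᶠ x in 𝓝 (0:ℝ), 0 < psi c x := by
      have := hpsi0.preimage_mem_nhds (Ioi_mem_nhds (by rw [hpsi0val]; exact hc))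
      filter_upwards [this] with x hx using hx
    exact this.filter_mono nhdsWithin_le_nhds
  obtain ⟨a, hapos, haIoo⟩ := (hev0.and (eventually_of_mem hmem0 (fun x hx => hx))).exists
  -- psi tends to -∞ at 1⁻
  have htends : Tendsto (psi c) (𝓝[<] (1:ℝ)) atBot := by
    have hne : (1:ℝ) - 1 + c * 1 ≠ 0 := by simpa using ne_of_gt hc
    have h1 : ContinuousAt (fun x : ℝ => c / (1 - x + c * x) - Real.log (1 - x + c * x)) 1 := by
      have hw : ContinuousAt (fun x : ℝ => 1 - x + c * x) 1 := by fun_prop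
      exact (continuousAt_const.div hw hne).sub (ContinuousAt.log hw hne)
    have hpart1 : Tendsto (fun x : ℝ => c / (1 - x + c * x) - Real.log (1 - x + c * x))
        (𝓝[<] (1:ℝ)) (𝓝 (c / (1 - 1 + c * 1) - Real.log (1 - 1 + c * 1))) :=
      (h1.tendsto).mono_left nhdsWithin_le_nhds
    have hsub : Tendsto (fun x : ℝ => 1 - x) (𝓝[<] (1:ℝ)) (𝓝[>] (0:ℝ)) := by
      apply tendsto_nhdsWithin_of_tendsto_nhds_of_eventually_within
      · have : Tendsto (fun x : ℝ => 1 - x) (𝓝 (1:ℝ)) (𝓝 (1 - 1)) :=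
          (continuous_const.sub continuous_id).tendsto 1
        simpa using this.mono_left nhdsWithin_le_nhds
      · filter_upwards [self_mem_nhdsWithin] with x hx
        have hx1 : x < 1 := hx
        simp only [Set.mem_Ioi]
        linarith
    have hpart2 : Tendsto (fun x : ℝ => Real.log (1 - x)) (𝓝[<] (1:ℝ)) atBot :=
      Real.tendsto_log_nhdsGT_zero.comp hsub
    exact hpart1.add_atBot hpart2
  have hmem1 : Ioo (0:ℝ) 1 ∈ 𝓝[<] (1:ℝ) :=
    Ioo_mem_nhdsLT_of_mem (by constructor <;> norm_num)
  have hev1 : ∀ᶠ x in 𝓝[<] (1:ℝ), psi c x < 0 := htends.eventually (eventually_lt_atBot 0)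
  obtain ⟨a', ha'neg, ha'Ioo⟩ := (hev1.and (eventually_of_mem hmem1 (fun x hx => hx))).exists
  -- a < a'
  have hanti := psi_strictAnti hc
  have hab : a < a' := by
    by_contra h
    push_neg at h
    have := hanti.antitoneOn ha'Ioo haIoo h
    linarith
  -- IVT: a zero of psi
  have hsubset : Icc a a' ⊆ Ioo (0:ℝ) 1 := Icc_subset_Ioo haIoo.1 ha'Ioo.2
  have hcont : ContinuousOn (psi c) (Icc a a') := fun x hx =>
    (hasDerivAt_psi hc (hsubset hx)).continuousAt.continuousWithinAt
  have hivt := intermediate_value_Icc' (le_of_lt hab) hcont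
  have h0mem : (0:ℝ) ∈ Icc (psi c a') (psi c a) := ⟨le_of_lt ha'neg, le_of_lt hapos⟩
  obtain ⟨lam₂, hlamIcc, hpsilam⟩ := hivt h0mem
  have hlamIoo : lam₂ ∈ Ioo (0:ℝ) 1 := hsubset hlamIcc
  -- the strict maximum property
  have hmax : ∀ lam ∈ Ioo (0:ℝ) 1, lam ≠ lam₂ →
      b + (1 - lam) * Real.log (1 + c * lam / (1 - lam)) <
        b + (1 - lam₂) * Real.log (1 + c * lam₂ / (1 - lam₂)) := by
    intro lam hlam hne
    rw [G_eq hc hlam, G_eq hc hlamIoo]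
    rcases lt_or_gt_of_ne hne with hlt | hgt
    · -- lam < lam₂ : G strictly increasing on [lam, lam₂]
      have hsub2 : Icc lam lam₂ ⊆ Ioo (0:ℝ) 1 := Icc_subset_Ioo hlam.1 hlamIoo.2
      have hmono : StrictMonoOn (G b c) (Icc lam lam₂) := by
        apply strictMonoOn_of_deriv_pos (convex_Icc lam lam₂)
        · intro x hx
          exact (hasDerivAt_G hc (hsub2 hx)).continuousAt.continuousWithinAt
        · intro x hx
          rw [interior_Icc] at hx
          have hxIoo : x ∈ Ioo (0:ℝ) 1 := hsub2 (Ioo_subset_Icc_self hx)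
          rw [(hasDerivAt_G hc hxIoo).deriv]
          have := hanti hxIoo hlamIoo hx.2
          linarith [hpsilam ▸ this]
      exact hmono (left_mem_Icc.2 (le_of_lt hlt)) (right_mem_Icc.2 (le_of_lt hlt)) hlt
    · -- lam₂ < lam : G strictly decreasing on [lam₂, lam]
      have hsub2 : Icc lam₂ lam ⊆ Ioo (0:ℝ) 1 := Icc_subset_Ioo hlamIoo.1 hlam.2
      have hmono : StrictAntiOn (G b c) (Icc lam₂ lam) := by
        apply strictAntiOn_of_deriv_neg (convex_Icc lam₂ lam)
        · intro x hx
          exact (hasDerivAt_G hc (hsub2 hx)).continuousAt.continuousWithinAt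
        · intro x hx
          rw [interior_Icc] at hx
          have hxIoo : x ∈ Ioo (0:ℝ) 1 := hsub2 (Ioo_subset_Icc_self hx)
          rw [(hasDerivAt_G hc hxIoo).deriv]
          have := hanti hlamIoo hxIoo hx.1
          linarith [hpsilam ▸ this]
      exact hmono (left_mem_Icc.2 (le_of_lt hgt)) (right_mem_Icc.2 (le_of_lt hgt)) hgt
  refine ⟨lam₂, ⟨hlamIoo, hmax⟩, ?_⟩
  rintro y ⟨hyIoo, hymax⟩
  by_contra hne
  have h1 := hymax lam₂ hlamIoo (fun h => hne h.symm)
  have h2 := hmax y hyIoo hne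
  linarith
end

section
/- Let a, b, c be real numbers with a > 0, b > 0, c > 0 and define f₁ on (0,1) by f₁(λ) = b + (1−λ)·log(1 + c·λ/(1−λ)). Let λ₁ ∈ (0,1) be the unique solution of λ·(a+b) = f₁(λ), let λ₂ ∈ (0,1) be the unique maximizer of f₁ over (0,1), and set λ* = max{λ₁, λ₂}. Then for every λ ∈ (0,1), min{λ·(a+b), f₁(λ)} ≤ min{λ*·(a+b), f₁(λ*)}; that is, λ* maximizes the achievable rate R(λ) = min{λ·(a+b), f₁(λ)} over (0,1). -/
set_option maxHeartbeats 1000000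


/-- Theorem 1 (ideal protocol, IA method): λ* = max{λ₁, λ₂} maximizes the
achievable rate R(λ) = min{λ·(a+b), f₁(λ)} over (0,1), where λ₁ is the unique
solution of λ·(a+b) = f₁(λ) and λ₂ the unique maximizer of f₁. -/
theorem ideal_IA_optimal_lambda (a b c : ℝ) (ha : 0 < a) (hb : 0 < b) (hc : 0 < c)
    (f₁ : ℝ → ℝ)
    (hf₁ : ∀ lam : ℝ, f₁ lam = b + (1 - lam) * Real.log (1 + c * lam / (1 - lam)))
    (lam₁ lam₂ : ℝ)
    (hlam₁ : lam₁ ∈ Set.Ioo (0 : ℝ) 1)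
    (hlam₁eq : lam₁ * (a + b) = f₁ lam₁)
    (hlam₁uniq : ∀ lam ∈ Set.Ioo (0 : ℝ) 1, lam * (a + b) = f₁ lam → lam = lam₁)
    (hlam₂ : lam₂ ∈ Set.Ioo (0 : ℝ) 1)
    (hlam₂max : ∀ lam ∈ Set.Ioo (0 : ℝ) 1, lam ≠ lam₂ → f₁ lam < f₁ lam₂) :
    ∀ lam ∈ Set.Ioo (0 : ℝ) 1,
      min (lam * (a + b)) (f₁ lam) ≤
        min (max lam₁ lam₂ * (a + b)) (f₁ (max lam₁ lam₂)) := by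
  obtain ⟨h10, h11⟩ := hlam₁
  obtain ⟨h20, h21⟩ := hlam₂
  -- f₁ is concave on (0,1)
  have hconc : ConcaveOn ℝ (Set.Ioo (0:ℝ) 1) f₁ := by
    refine ⟨convex_Ioo 0 1, ?_⟩
    rintro x ⟨hx0, hx1⟩ y ⟨hy0, hy1⟩ s t hs ht hst
    simp only [smul_eq_mul]
    rcases eq_or_lt_of_le hs with hs0 | hs0
    · have ht1 : t = 1 := by linarith
      subst ht1
      simp [← hs0]
    rcases eq_or_lt_of_le ht with ht0 | ht0
    · have hs1 : s = 1 := by linarith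
      subst hs1
      simp [← ht0]
    have hzx : (0:ℝ) < 1 - x := by linarith
    have hzy : (0:ℝ) < 1 - y := by linarith
    have hWpos : (0:ℝ) < 1 - (s*x + t*y) := by nlinarith
    have hW : 1 - (s*x + t*y) = s*(1-x) + t*(1-y) := by nlinarith
    have hXpos : (0:ℝ) < 1 + c * x / (1 - x) := by positivity
    have hYpos : (0:ℝ) < 1 + c * y / (1 - y) := by positivity
    set W := 1 - (s*x + t*y) with hWdef
    have hWne : W ≠ 0 := ne_of_gt hWpos
    have hapos : 0 < s*(1-x)/W := by positivity
    have hbpos : 0 < t*(1-y)/W := by positivity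
    have hab : s*(1-x)/W + t*(1-y)/W = 1 := by
      field_simp
      linarith [hW]
    have key := strictConcaveOn_log_Ioi.concaveOn.2
      (Set.mem_Ioi.2 hXpos) (Set.mem_Ioi.2 hYpos) hapos.le hbpos.le hab
    simp only [smul_eq_mul] at key
    -- identify the convex combination of the arguments
    have hxne : (1:ℝ) - x ≠ 0 := ne_of_gt hzx
    have hyne : (1:ℝ) - y ≠ 0 := ne_of_gt hzy
    have e1 : s*(1-x)/W * (1 + c * x / (1 - x)) = s * ((1-x) + c*x) / W := by
      field_simp
    have e2 : t*(1-y)/W * (1 + c * y / (1 - y)) = t * ((1-y) + c*y) / W := by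
      field_simp
    have e3 : s * ((1-x) + c*x) + t * ((1-y) + c*y) = W + c * (s*x + t*y) := by
      rw [hWdef]; linear_combination hst
    have hcomb : s*(1-x)/W * (1 + c * x / (1 - x)) + t*(1-y)/W * (1 + c * y / (1 - y))
        = 1 + c * (s*x + t*y) / (1 - (s*x + t*y)) := by
      rw [e1, e2, ← add_div, e3, ← hWdef]
      field_simp
    rw [hcomb] at key
    have key2 := mul_le_mul_of_nonneg_left key hWpos.le
    have hfa : W * (s*(1-x)/W * Real.log (1 + c * x / (1 - x)))
        = s * ((1-x) * Real.log (1 + c * x / (1 - x))) := by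
      field_simp
    have hfb : W * (t*(1-y)/W * Real.log (1 + c * y / (1 - y)))
        = t * ((1-y) * Real.log (1 + c * y / (1 - y))) := by
      field_simp
    rw [mul_add, hfa, hfb] at key2
    rw [hf₁ x, hf₁ y, hf₁ (s*x + t*y)]
    nlinarith [key2]
  -- a point μ with μ < lam₁ where the line is strictly below f₁
  set μ : ℝ := min lam₁ (b / (a+b)) / 2 with hμdef
  have hab0 : (0:ℝ) < a + b := by linarith
  have hμ0 : 0 < μ := by
    have : 0 < min lam₁ (b/(a+b)) := lt_min h10 (by positivity)
    linarith
  have hμlt1 : μ < lam₁ := by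
    have h := min_le_left lam₁ (b/(a+b))
    have : 0 < min lam₁ (b/(a+b)) := lt_min h10 (by positivity)
    simp only [hμdef]; linarith
  have hμmem : μ ∈ Set.Ioo (0:ℝ) 1 := ⟨hμ0, by linarith⟩
  have hμbelow : μ * (a + b) < f₁ μ := by
    have h1 : μ * (a + b) ≤ b / 2 := by
      have h := min_le_right lam₁ (b/(a+b))
      have hμle : μ ≤ (b/(a+b))/2 := by simp only [hμdef]; linarith
      calc μ * (a+b) ≤ (b/(a+b))/2 * (a+b) := by nlinarith
        _ = b / 2 := by field_simp
    have h2 : b ≤ f₁ μ := by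
      rw [hf₁ μ]
      have hlog : 0 ≤ Real.log (1 + c * μ / (1 - μ)) := by
        apply Real.log_nonneg
        have : 0 ≤ c * μ / (1 - μ) := by
          have : (0:ℝ) < 1 - μ := by linarith [hμmem.2]
          positivity
        linarith
      nlinarith [mul_nonneg (by linarith [hμmem.2] : (0:ℝ) ≤ 1 - μ) hlog]
    linarith
  -- Key: for l > lam₁ in (0,1), f₁ l < l * (a+b)
  have hK : ∀ l ∈ Set.Ioo (0:ℝ) 1, lam₁ < l → f₁ l < l * (a + b) := by
    rintro l ⟨hl0, hl1⟩ hl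
    have hlμ : 0 < l - μ := by linarith
    set u : ℝ := (l - lam₁) / (l - μ) with hudef
    have hu0 : 0 < u := div_pos (by linarith) hlμ
    have hu1 : u < 1 := by
      rw [hudef, div_lt_one hlμ]; linarith
    have huml : u * (l - μ) = l - lam₁ := div_mul_cancel₀ _ (ne_of_gt hlμ)
    have hcombeq : u * μ + (1-u) * l = lam₁ := by linear_combination -huml
    have hcc := hconc.2 hμmem ⟨hl0, hl1⟩ hu0.le (by linarith : (0:ℝ) ≤ 1 - u)
      (by ring : u + (1-u) = 1)
    simp only [smul_eq_mul] at hcc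
    rw [hcombeq] at hcc
    -- f₁ lam₁ = lam₁ * (a+b) = u*μ*(a+b) + (1-u)*l*(a+b)
    nlinarith [hcc, hμbelow]
  -- monotone decreasing after the max
  have hmax' : ∀ q ∈ Set.Ioo (0:ℝ) 1, f₁ q ≤ f₁ lam₂ := by
    intro q hq
    rcases eq_or_ne q lam₂ with h | h
    · rw [h]
    · exact (hlam₂max q hq h).le
  have hmono : ∀ x ∈ Set.Ioo (0:ℝ) 1, ∀ y ∈ Set.Ioo (0:ℝ) 1,
      lam₂ ≤ x → x ≤ y → f₁ y ≤ f₁ x := by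
    rintro x hx y hy h2x hxy
    rcases eq_or_lt_of_le hxy with rfl | hxy
    · exact le_rfl
    rcases eq_or_lt_of_le h2x with h2x' | h2x'
    · rw [← h2x']; exact hmax' y hy
    have hy2 : 0 < y - lam₂ := by linarith
    set u : ℝ := (y - x) / (y - lam₂) with hudef
    have hu0 : 0 < u := div_pos (by linarith) hy2
    have hu1 : u < 1 := by rw [hudef, div_lt_one hy2]; linarith
    have huml : u * (y - lam₂) = y - x := div_mul_cancel₀ _ (ne_of_gt hy2)
    have hcombeq : u * lam₂ + (1-u) * y = x := by linear_combination -huml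
    have hcc := hconc.2 ⟨h20, h21⟩ hy hu0.le (by linarith : (0:ℝ) ≤ 1 - u)
      (by ring : u + (1-u) = 1)
    simp only [smul_eq_mul] at hcc
    rw [hcombeq] at hcc
    nlinarith [hmax' y hy, hcc]
  -- assemble
  rintro lam ⟨hl0, hl1⟩
  set L := max lam₁ lam₂ with hLdef
  have hLmem : L ∈ Set.Ioo (0:ℝ) 1 := by
    rcases max_cases lam₁ lam₂ with ⟨h, _⟩ | ⟨h, _⟩ <;> rw [hLdef, h]
    · exact ⟨h10, h11⟩
    · exact ⟨h20, h21⟩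
  have hL1 : lam₁ ≤ L := le_max_left _ _
  have hL2 : lam₂ ≤ L := le_max_right _ _
  have hf1L : f₁ lam₁ ≤ f₁ L := by
    rcases max_cases lam₁ lam₂ with ⟨h, _⟩ | ⟨h, hlt⟩ <;> rw [hLdef, h]
    · exact hmax' lam₁ ⟨h10, h11⟩
  rcases le_or_gt lam lam₁ with hcase | hcase
  · -- lam ≤ lam₁ : use line bound
    have h1 : min (lam * (a+b)) (f₁ lam) ≤ lam₁ * (a+b) := by
      calc min (lam * (a+b)) (f₁ lam) ≤ lam * (a+b) := min_le_left _ _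
        _ ≤ lam₁ * (a+b) := by nlinarith
    refine le_min ?_ ?_
    · calc min (lam * (a+b)) (f₁ lam) ≤ lam₁ * (a+b) := h1
        _ ≤ L * (a+b) := by nlinarith
    · calc min (lam * (a+b)) (f₁ lam) ≤ lam₁ * (a+b) := h1
        _ = f₁ lam₁ := hlam₁eq
        _ ≤ f₁ L := hf1L
  · rcases le_or_gt lam L with hcase2 | hcase2
    · -- lam₁ < lam ≤ L, so L = lam₂
      have hLeq : L = lam₂ := by
        rcases max_cases lam₁ lam₂ with ⟨h, hle⟩ | ⟨h, _⟩
        · exfalso; rw [hLdef, h] at hcase2; linarith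
        · rw [hLdef, h]
      refine le_min ?_ ?_
      · calc min (lam * (a+b)) (f₁ lam) ≤ lam * (a+b) := min_le_left _ _
          _ ≤ L * (a+b) := by nlinarith
      · calc min (lam * (a+b)) (f₁ lam) ≤ f₁ lam := min_le_right _ _
          _ ≤ f₁ lam₂ := hmax' lam ⟨hl0, hl1⟩
          _ = f₁ L := by rw [hLeq]
    · -- lam > L ≥ both
      have h2lam : lam₂ ≤ lam := le_trans hL2 hcase2.le
      have hflam : min (lam * (a+b)) (f₁ lam) ≤ f₁ lam := min_le_right _ _
      refine le_min ?_ ?_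
      · -- f₁ lam ≤ L * (a+b)
        rcases max_cases lam₁ lam₂ with ⟨h, hle⟩ | ⟨h, hlt⟩
        · -- L = lam₁, lam₂ ≤ lam₁
          have : f₁ lam ≤ f₁ lam₁ :=
            hmono lam₁ ⟨h10, h11⟩ lam ⟨hl0, hl1⟩ hle (by rw [hLdef, h] at hcase2; linarith)
          calc min (lam * (a+b)) (f₁ lam) ≤ f₁ lam := hflam
            _ ≤ f₁ lam₁ := this
            _ = lam₁ * (a+b) := hlam₁eq.symm
            _ = L * (a+b) := by rw [hLdef, h]
        · -- L = lam₂ > lam₁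
          have hKl := hK lam₂ ⟨h20, h21⟩ hlt
          calc min (lam * (a+b)) (f₁ lam) ≤ f₁ lam := hflam
            _ ≤ f₁ lam₂ := hmax' lam ⟨hl0, hl1⟩
            _ ≤ lam₂ * (a+b) := hKl.le
            _ = L * (a+b) := by rw [hLdef, h]
      · calc min (lam * (a+b)) (f₁ lam) ≤ f₁ lam := hflam
          _ ≤ f₁ L := hmono L hLmem lam ⟨hl0, hl1⟩ hL2 hcase2.le
end

section
/- Let m and c be real numbers with m ≥ 0 and c ≥ 0 and define f₂ on the open interval (0,1) by f₂(λ) = λ·log(1+m) + (1−λ)·log(1 + m + c·λ/(1−λ)). Then f₂ is concave on (0,1); moreover, if c > 0 then f₂ is strictly concave on (0,1). -/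
open Real Set

private lemma aux_hasDerivAt_f (m c : ℝ) (hm : 0 ≤ m) (hc : 0 ≤ c) {x : ℝ}
    (hx : x ∈ Ioo (0:ℝ) 1) :
    HasDerivAt (fun lam : ℝ => lam * Real.log (1 + m) +
        (1 - lam) * Real.log (1 + m + c * lam / (1 - lam)))
      (Real.log (1 + m) - Real.log (1 + m + c * x / (1 - x))
        + c / ((1 + m) * (1 - x) + c * x)) x := by
  have hx1 : 0 < 1 - x := by linarith [hx.2]
  have hx1' : (1 - x) ≠ 0 := ne_of_gt hx1
  have hx0 : 0 < x := hx.1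
  have hu : 0 < 1 + m + c * x / (1 - x) :=
    add_pos_of_pos_of_nonneg (by linarith) (div_nonneg (mul_nonneg hc hx0.le) hx1.le)
  have hv : 0 < (1 + m) * (1 - x) + c * x :=
    add_pos_of_pos_of_nonneg (mul_pos (by linarith) hx1) (mul_nonneg hc hx0.le)
  have h1 : HasDerivAt (fun lam : ℝ => lam * Real.log (1 + m)) (Real.log (1 + m)) x := by
    simpa using (hasDerivAt_id x).mul_const (Real.log (1 + m))
  have hden : HasDerivAt (fun lam : ℝ => 1 - lam) (-1 : ℝ) x := by
    simpa using (hasDerivAt_const x (1:ℝ)).fun_sub (hasDerivAt_id x)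
  have hnum : HasDerivAt (fun lam : ℝ => c * lam) c x := by
    simpa using (hasDerivAt_id x).const_mul c
  have hU : HasDerivAt (fun lam : ℝ => 1 + m + c * lam / (1 - lam))
      ((c * (1 - x) - c * x * (-1)) / (1 - x) ^ 2) x := by
    simpa using (hasDerivAt_const x (1 + m)).fun_add (hnum.fun_div hden hx1')
  have hlog : HasDerivAt (fun lam : ℝ => Real.log (1 + m + c * lam / (1 - lam)))
      (((c * (1 - x) - c * x * (-1)) / (1 - x) ^ 2) / (1 + m + c * x / (1 - x))) x :=
    hU.log (ne_of_gt hu)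
  have hB := hden.fun_mul hlog
  have := h1.fun_add hB
  refine this.congr_deriv ?_
  have hvne := ne_of_gt hv
  field_simp
  ring

private lemma aux_hasDerivAt_g (m c : ℝ) (hm : 0 ≤ m) (hc : 0 ≤ c) {x : ℝ}
    (hx : x ∈ Ioo (0:ℝ) 1) :
    HasDerivAt (fun lam : ℝ => Real.log (1 + m) - Real.log (1 + m + c * lam / (1 - lam))
        + c / ((1 + m) * (1 - lam) + c * lam))
      (-(c ^ 2) / ((1 - x) * ((1 + m) * (1 - x) + c * x) ^ 2)) x := by
  have hx1 : 0 < 1 - x := by linarith [hx.2]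
  have hx1' : (1 - x) ≠ 0 := ne_of_gt hx1
  have hx0 : 0 < x := hx.1
  have hu : 0 < 1 + m + c * x / (1 - x) :=
    add_pos_of_pos_of_nonneg (by linarith) (div_nonneg (mul_nonneg hc hx0.le) hx1.le)
  have hv : 0 < (1 + m) * (1 - x) + c * x :=
    add_pos_of_pos_of_nonneg (mul_pos (by linarith) hx1) (mul_nonneg hc hx0.le)
  have hvne := ne_of_gt hv
  have hden : HasDerivAt (fun lam : ℝ => 1 - lam) (-1 : ℝ) x := by
    simpa using (hasDerivAt_const x (1:ℝ)).fun_sub (hasDerivAt_id x)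
  have hnum : HasDerivAt (fun lam : ℝ => c * lam) c x := by
    simpa using (hasDerivAt_id x).const_mul c
  have hU : HasDerivAt (fun lam : ℝ => 1 + m + c * lam / (1 - lam))
      ((c * (1 - x) - c * x * (-1)) / (1 - x) ^ 2) x := by
    simpa using (hasDerivAt_const x (1 + m)).fun_add (hnum.fun_div hden hx1')
  have hlog : HasDerivAt (fun lam : ℝ => Real.log (1 + m + c * lam / (1 - lam)))
      (((c * (1 - x) - c * x * (-1)) / (1 - x) ^ 2) / (1 + m + c * x / (1 - x))) x :=
    hU.log (ne_of_gt hu)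
  have hV : HasDerivAt (fun lam : ℝ => (1 + m) * (1 - lam) + c * lam)
      ((1 + m) * (-1) + c) x := by
    simpa using ((hden.const_mul (1 + m)).fun_add hnum)
  have hdiv : HasDerivAt (fun lam : ℝ => c / ((1 + m) * (1 - lam) + c * lam))
      ((0 * ((1 + m) * (1 - x) + c * x) - c * ((1 + m) * (-1) + c))
        / ((1 + m) * (1 - x) + c * x) ^ 2) x :=
    (hasDerivAt_const x c).div hV hvne
  have := ((hasDerivAt_const x (Real.log (1 + m))).fun_sub hlog).fun_add hdiv
  refine this.congr_deriv ?_
  have hune := ne_of_gt hu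
  field_simp
  ring

/-- Lemma 3: f₂(λ) = λ·log(1+m) + (1−λ)·log(1 + m + cλ/(1−λ)) is concave on (0,1),
and strictly concave when c > 0. -/
theorem f2_concave (m c : ℝ) (hm : 0 ≤ m) (hc : 0 ≤ c) :
    ConcaveOn ℝ (Set.Ioo 0 1)
      (fun lam : ℝ => lam * Real.log (1 + m) +
        (1 - lam) * Real.log (1 + m + c * lam / (1 - lam))) ∧
    (0 < c →
      StrictConcaveOn ℝ (Set.Ioo 0 1)
        (fun lam : ℝ => lam * Real.log (1 + m) +
          (1 - lam) * Real.log (1 + m + c * lam / (1 - lam)))) := by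
  set f : ℝ → ℝ := fun lam : ℝ => lam * Real.log (1 + m) +
      (1 - lam) * Real.log (1 + m + c * lam / (1 - lam)) with hf_def
  set g : ℝ → ℝ := fun lam : ℝ => Real.log (1 + m) - Real.log (1 + m + c * lam / (1 - lam))
      + c / ((1 + m) * (1 - lam) + c * lam) with hg_def
  have hcont : ContinuousOn f (Ioo 0 1) := fun x hx =>
    (aux_hasDerivAt_f m c hm hc hx).continuousAt.continuousWithinAt
  have hE : ∀ x ∈ Ioo (0:ℝ) 1, deriv f =ᶠ[nhds x] g := by
    intro x hx
    filter_upwards [Ioo_mem_nhds hx.1 hx.2] with y hy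
    exact (aux_hasDerivAt_f m c hm hc hy).deriv
  have hderiv2 : ∀ x ∈ Ioo (0:ℝ) 1,
      deriv^[2] f x = -(c ^ 2) / ((1 - x) * ((1 + m) * (1 - x) + c * x) ^ 2) := by
    intro x hx
    have : deriv^[2] f x = deriv (deriv f) x := rfl
    rw [this, (hE x hx).deriv_eq, (aux_hasDerivAt_g m c hm hc hx).deriv]
  have hdenpos : ∀ x ∈ Ioo (0:ℝ) 1, 0 < (1 - x) * ((1 + m) * (1 - x) + c * x) ^ 2 := by
    intro x hx
    have hx1 : 0 < 1 - x := by linarith [hx.2]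
    have hv : 0 < (1 + m) * (1 - x) + c * x :=
      add_pos_of_pos_of_nonneg (mul_pos (by linarith) hx1) (mul_nonneg hc hx.1.le)
    positivity
  constructor
  · apply concaveOn_of_deriv2_nonpos (convex_Ioo 0 1) hcont
    · rw [interior_Ioo]
      exact fun x hx => (aux_hasDerivAt_f m c hm hc hx).differentiableAt.differentiableWithinAt
    · rw [interior_Ioo]
      intro x hx
      exact (((aux_hasDerivAt_g m c hm hc hx).differentiableAt.congr_of_eventuallyEq
        (hE x hx))).differentiableWithinAt
    · rw [interior_Ioo]
      intro x hx
      rw [hderiv2 x hx]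
      exact div_nonpos_of_nonpos_of_nonneg (neg_nonpos.mpr (sq_nonneg c)) (hdenpos x hx).le
  · intro hcpos
    apply strictConcaveOn_of_deriv2_neg (convex_Ioo 0 1) hcont
    rw [interior_Ioo]
    intro x hx
    rw [hderiv2 x hx]
    exact div_neg_of_neg_of_pos (neg_neg_of_pos (by positivity)) (hdenpos x hx)
end

section
/- Let a, m, c be real numbers with a > 0, m > 0, c > 0, set b = log(1+m), and define f₂ on (0,1) by f₂(λ) = λ·log(1+m) + (1−λ)·log(1 + m + c·λ/(1−λ)). Then the equation λ·(a+b) = f₂(λ) has exactly one solution λ₁ in the open interval (0,1). -/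
/-- log x < 2 * sqrt x for x > 0. -/
private lemma log_lt_two_sqrt {x : ℝ} (hx : 0 < x) : Real.log x < 2 * Real.sqrt x := by
  have hs : (0:ℝ) < Real.sqrt x := Real.sqrt_pos.2 hx
  have h := Real.log_le_sub_one_of_pos hs
  have hlog : Real.log (Real.sqrt x) = Real.log x / 2 := Real.log_sqrt hx.le
  linarith [hs]

/-- Uniqueness of the positive root of a·u = log(M + c·u). -/
private lemma root_not_lt {a c M : ℝ} (ha : 0 < a) (hc : 0 < c) (hM : 1 < M)
    {u v : ℝ} (hu : 0 < u) (huv : u < v)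
    (h1 : a * u = Real.log (M + c * u)) (h2 : a * v = Real.log (M + c * v)) : False := by
  have hv : 0 < v := hu.trans huv
  have hMu : 0 < M + c * u := by nlinarith
  have hMv : 0 < M + c * v := by nlinarith
  -- Step 1: a*(v-u) = log((M+cv)/(M+cu)) < c(v-u)/(M+cu)
  have hratio : (M + c * v) / (M + c * u) = 1 + c * (v - u) / (M + c * u) := by
    field_simp; ring
  have hx : 0 < c * (v - u) / (M + c * u) :=
    div_pos (by nlinarith) hMu
  have hlt : Real.log ((M + c * v) / (M + c * u)) < c * (v - u) / (M + c * u) := by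
    rw [hratio]
    have := Real.log_lt_sub_one_of_pos (by linarith : (0:ℝ) < 1 + c * (v - u) / (M + c * u))
      (by linarith)
    linarith
  have hdiff : a * (v - u) = Real.log ((M + c * v) / (M + c * u)) := by
    rw [Real.log_div hMv.ne' hMu.ne']
    linarith
  have hA : a * (M + c * u) < c := by
    have h3 : a * (v - u) < c * (v - u) / (M + c * u) := hdiff ▸ hlt
    have h4 : a * (v - u) * (M + c * u) < c * (v - u) := (lt_div_iff₀ hMu).mp h3
    rw [show a * (v - u) * (M + c * u) = a * (M + c * u) * (v - u) from by ring] at h4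
    exact lt_of_mul_lt_mul_right h4 (by linarith : (0:ℝ) ≤ v - u)
  -- Step 2: from the root at u, a*(M+cu) > c
  have hlog1 : Real.log (1 + c * u) < Real.log (M + c * u) :=
    Real.log_lt_log (by positivity) (by linarith)
  have hlow : c * u / (1 + c * u) < Real.log (1 + c * u) := by
    have h5 := Real.log_lt_sub_one_of_pos
      (show (0:ℝ) < 1 / (1 + c * u) by positivity)
      (by
        have : (1:ℝ) < 1 + c * u := by nlinarith
        intro h; rw [div_eq_one_iff_eq (by nlinarith : (1:ℝ) + c * u ≠ 0)] at h; linarith)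
    have h6 : Real.log (1 / (1 + c * u)) = - Real.log (1 + c * u) := by
      rw [Real.log_div one_ne_zero (by nlinarith : (1:ℝ) + c * u ≠ 0), Real.log_one]; ring
    rw [h6] at h5
    have h7 : 1 / (1 + c * u) - 1 = -(c * u / (1 + c * u)) := by
      field_simp; ring
    rw [h7] at h5; linarith
  have hB : c < a * (M + c * u) := by
    have h8 : c * u / (1 + c * u) < a * u := by linarith
    have h9 : c * u < a * u * (1 + c * u) :=
      (div_lt_iff₀ (by positivity : (0:ℝ) < 1 + c * u)).mp h8
    rw [show a * u * (1 + c * u) = a * (1 + c * u) * u from by ring] at h9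
    have h10 : c < a * (1 + c * u) := lt_of_mul_lt_mul_right h9 hu.le
    have h11 : a * (1 + c * u) < a * (M + c * u) :=
      mul_lt_mul_of_pos_left (by linarith) ha
    linarith
  linarith

private lemma root_unique {a c M : ℝ} (ha : 0 < a) (hc : 0 < c) (hM : 1 < M)
    {u v : ℝ} (hu : 0 < u) (hv : 0 < v)
    (h1 : a * u = Real.log (M + c * u)) (h2 : a * v = Real.log (M + c * v)) : u = v := by
  rcases lt_trichotomy u v with h | h | h
  · exact absurd h (fun h => root_not_lt ha hc hM hu h h1 h2)
  · exact h
  · exact absurd h (fun h => root_not_lt ha hc hM hv h h2 h1)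

/-- Existence of a positive root of a·u = log(M + c·u). -/
private lemma root_exists {a c M : ℝ} (ha : 0 < a) (hc : 0 < c) (hM : 1 < M) :
    ∃ u : ℝ, 0 < u ∧ a * u = Real.log (M + c * u) := by
  have hlogM : 0 < Real.log M := Real.log_pos hM
  obtain ⟨u₁, hu₁, hau₁⟩ : ∃ u₁ : ℝ, 0 < u₁ ∧ a * u₁ = Real.log M / 2 :=
    ⟨Real.log M / (2 * a), by positivity, by field_simp⟩
  obtain ⟨u₂, hu₂1, hu₁₂, hu₂big⟩ :
      ∃ u₂ : ℝ, 1 ≤ u₂ ∧ u₁ < u₂ ∧ 4 * (M + c) < a ^ 2 * u₂ := by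
    refine ⟨max u₁ 1 + 4 * (M + c) / a ^ 2 + 1, ?_, ?_, ?_⟩
    · have := le_max_right u₁ 1
      have h0 : 0 < 4 * (M + c) / a ^ 2 := by positivity
      linarith
    · have := le_max_left u₁ 1
      have h0 : 0 < 4 * (M + c) / a ^ 2 := by positivity
      linarith
    · have h0 : a ^ 2 * (4 * (M + c) / a ^ 2) = 4 * (M + c) := by
        field_simp
      have h1 : (0:ℝ) ≤ max u₁ 1 := le_trans hu₁.le (le_max_left _ _)
      have h2 : 0 < a ^ 2 := by positivity
      nlinarith
  set g : ℝ → ℝ := fun u => a * u - Real.log (M + c * u) with hg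
  -- g u₁ < 0
  have hgu₁ : g u₁ < 0 := by
    have h2 : Real.log M < Real.log (M + c * u₁) :=
      Real.log_lt_log (by linarith) (by nlinarith)
    simp only [hg]; linarith
  -- g u₂ > 0
  have hgu₂ : 0 < g u₂ := by
    have hu₂pos : (0:ℝ) < u₂ := by linarith
    have hMc : 0 < M + c * u₂ := by nlinarith
    have hkey : 4 * (M + c * u₂) < (a * u₂) ^ 2 := by nlinarith
    have h3 : Real.sqrt (M + c * u₂) < a * u₂ / 2 := by
      rw [Real.sqrt_lt' (div_pos (mul_pos ha hu₂pos) two_pos)]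
      nlinarith
    have h4 : Real.log (M + c * u₂) < 2 * Real.sqrt (M + c * u₂) := log_lt_two_sqrt hMc
    simp only [hg]; linarith
  -- IVT
  have hcont : ContinuousOn g (Set.Icc u₁ u₂) := by
    apply ContinuousOn.sub
    · exact (continuous_const.mul continuous_id).continuousOn
    · apply ContinuousOn.log
      · exact (continuous_const.add (continuous_const.mul continuous_id)).continuousOn
      · intro x hx
        have : 0 < x := lt_of_lt_of_le hu₁ hx.1
        nlinarith [this]
  have hmem : (0:ℝ) ∈ Set.Ioo (g u₁) (g u₂) := ⟨hgu₁, hgu₂⟩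
  obtain ⟨u, hu, hgu⟩ := intermediate_value_Ioo hu₁₂.le hcont hmem
  refine ⟨u, lt_trans hu₁ hu.1, ?_⟩
  simp only [hg] at hgu
  linarith [hgu]

/-- The equation λ·(a+b) = f₂(λ), with b = log(1+m), has exactly one solution
in (0,1) (intersection point λ₁ of Theorem 2). -/
theorem f2_unique_intersection (a m c : ℝ) (ha : 0 < a) (hm : 0 < m) (hc : 0 < c) :
    ∃! lam : ℝ, lam ∈ Set.Ioo (0 : ℝ) 1 ∧
      lam * (a + Real.log (1 + m)) =
        lam * Real.log (1 + m) +
          (1 - lam) * Real.log (1 + m + c * lam / (1 - lam)) := by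
  have hM : (1:ℝ) < 1 + m := by linarith
  obtain ⟨u, hu, hroot⟩ := root_exists ha hc hM
  have h1u : (0:ℝ) < 1 + u := by linarith
  refine ⟨u / (1 + u), ⟨⟨by positivity, (div_lt_one h1u).2 (by linarith)⟩, ?_⟩, ?_⟩
  · -- the equation holds
    have hlam1 : 1 - u / (1 + u) = 1 / (1 + u) := by field_simp; ring
    have hlam2 : c * (u / (1 + u)) / (1 - u / (1 + u)) = c * u := by
      rw [hlam1]; field_simp
    rw [hlam2, hlam1]
    have : u / (1 + u) * a = 1 / (1 + u) * Real.log (1 + m + c * u) := by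
      rw [← hroot]; field_simp
    linarith [this]
  · -- uniqueness
    rintro lam ⟨⟨hl0, hl1⟩, heq⟩
    have h1l : 0 < 1 - lam := by linarith
    set v : ℝ := lam / (1 - lam) with hv
    have hvpos : 0 < v := by positivity
    have hcv : c * lam / (1 - lam) = c * v := by rw [hv]; ring
    have hlamv : lam = v / (1 + v) := by
      rw [hv]; field_simp; ring
    have hrootv : a * v = Real.log (1 + m + c * v) := by
      have h2 : lam * a = (1 - lam) * Real.log (1 + m + c * v) := by
        rw [← hcv]; linarith [heq]
      have h3 : lam = v * (1 - lam) := by rw [hv]; field_simp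
      have h5 : (a * v) * (1 - lam) = Real.log (1 + m + c * v) * (1 - lam) := by
        linear_combination h2 - a * h3
      exact mul_right_cancel₀ h1l.ne' h5
    have huv : v = u := root_unique ha hc hM hvpos hu hrootv hroot
    rw [hlamv, huv]
end

section
/- Let m and c be real numbers with m ≥ 0 and c > 0, and define f₂ on (0,1) by f₂(λ) = λ·log(1+m) + (1−λ)·log(1 + m + c·λ/(1−λ)). Then there exists a unique λ₂ ∈ (0,1) such that f₂(λ) < f₂(λ₂) for every λ ∈ (0,1) with λ ≠ λ₂; that is, f₂ attains its maximum over (0,1) at a unique interior point (the stagnation point of f₂). -/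
open Real Set Filter Topology

/-- f₂ attains its maximum over (0,1) at a unique interior point
(the stagnation point λ₂ of Theorem 2). -/
theorem f2_unique_maximizer (m c : ℝ) (hm : 0 ≤ m) (hc : 0 < c) :
    ∃! lam₂ : ℝ, lam₂ ∈ Set.Ioo (0 : ℝ) 1 ∧
      ∀ lam ∈ Set.Ioo (0 : ℝ) 1, lam ≠ lam₂ →
        lam * Real.log (1 + m) +
            (1 - lam) * Real.log (1 + m + c * lam / (1 - lam)) <
          lam₂ * Real.log (1 + m) +
            (1 - lam₂) * Real.log (1 + m + c * lam₂ / (1 - lam₂)) := by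
  set a : ℝ := 1 + m with ha_def
  have ha : (0:ℝ) < a := by simp only [ha_def]; linarith
  set A : ℝ := c - a with hA_def
  set F : ℝ → ℝ := fun x =>
      x * Real.log a + (1 - x) * Real.log (a + A * x) - (1 - x) * Real.log (1 - x) with hF
  -- positivity of the inner argument on [0,1]
  have hP : ∀ x ∈ Icc (0:ℝ) 1, 0 < a + A * x := by
    intro x hx
    obtain ⟨h0, h1⟩ := hx
    have heq : a + A * x = a * (1 - x) + c * x := by rw [hA_def]; ring
    rw [heq]
    rcases lt_or_eq_of_le h1 with h | h
    · have : 0 < a * (1 - x) := mul_pos ha (by linarith)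
      nlinarith [mul_nonneg hc.le h0]
    · subst h; nlinarith
  -- the theorem expression equals F on (0,1)
  have hFeq : ∀ lam ∈ Ioo (0:ℝ) 1,
      lam * Real.log (1 + m) + (1 - lam) * Real.log (1 + m + c * lam / (1 - lam)) = F lam := by
    intro lam hlam
    obtain ⟨h0, h1⟩ := hlam
    have hs : (0:ℝ) < 1 - lam := by linarith
    have hPl : 0 < a + A * lam := hP lam ⟨h0.le, h1.le⟩
    have harg : 1 + m + c * lam / (1 - lam) = (a + A * lam) / (1 - lam) := by
      rw [hA_def, ha_def]; field_simp; ring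
    rw [harg, Real.log_div hPl.ne' hs.ne', hF]
    simp only [ha_def]; ring
  -- continuity of F on [0,1]
  have hcont : ContinuousOn F (Icc (0:ℝ) 1) := by
    have h3 : Continuous fun x : ℝ => (1 - x) * Real.log (1 - x) := by
      have hsub : Continuous fun x : ℝ => 1 - x := continuous_const.sub continuous_id
      have := Real.continuous_mul_log.comp hsub
      exact this
    apply ContinuousOn.sub
    · apply ContinuousOn.add
      · exact (continuous_id.mul continuous_const).continuousOn
      · exact (continuous_const.sub continuous_id).continuousOn.mul
          (((continuous_const.add (continuous_const.mul continuous_id)).continuousOn).log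
            (fun x hx => (hP x hx).ne'))
    · exact h3.continuousOn
  -- first derivative
  set F1 : ℝ → ℝ := fun x =>
      Real.log a - Real.log (a + A * x) + (1 - x) * (A / (a + A * x)) + Real.log (1 - x) + 1
      with hF1
  have hinner : ∀ x : ℝ, HasDerivAt (fun y => a + A * y) A x := by
    intro x
    have : HasDerivAt (fun y : ℝ => a + A * y) (0 + A * 1) x :=
      (hasDerivAt_const x a).add ((hasDerivAt_id x).const_mul A)
    simpa using this
  have hone : ∀ x : ℝ, HasDerivAt (fun y : ℝ => 1 - y) (-1) x := by
    intro x
    have : HasDerivAt (fun y : ℝ => 1 - y) (0 - 1) x :=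
      (hasDerivAt_const x 1).sub (hasDerivAt_id x)
    simpa using this
  have hderivF : ∀ x ∈ Ioo (0:ℝ) 1, HasDerivAt F (F1 x) x := by
    intro x hx
    obtain ⟨h0, h1⟩ := hx
    have hs : (0:ℝ) < 1 - x := by linarith
    have hPx : 0 < a + A * x := hP x ⟨h0.le, h1.le⟩
    have d1 : HasDerivAt (fun y : ℝ => y * Real.log a) (1 * Real.log a) x :=
      (hasDerivAt_id x).mul_const _
    have dlog2 : HasDerivAt (fun y => Real.log (a + A * y)) (A / (a + A * x)) x :=
      (hinner x).log hPx.ne'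
    have d2 : HasDerivAt (fun y => (1 - y) * Real.log (a + A * y))
        ((-1) * Real.log (a + A * x) + (1 - x) * (A / (a + A * x))) x :=
      (hone x).mul dlog2
    have dlog3 : HasDerivAt (fun y => Real.log (1 - y)) ((-1) / (1 - x)) x :=
      (hone x).log hs.ne'
    have d3 : HasDerivAt (fun y => (1 - y) * Real.log (1 - y))
        ((-1) * Real.log (1 - x) + (1 - x) * ((-1) / (1 - x))) x :=
      (hone x).mul dlog3
    have := (d1.add d2).sub d3
    have key : F1 x = 1 * Real.log a + ((-1) * Real.log (a + A * x) + (1 - x) * (A / (a + A * x)))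
        - ((-1) * Real.log (1 - x) + (1 - x) * ((-1) / (1 - x))) := by
      rw [hF1]
      field_simp
      ring
    rw [key]; exact this
  -- second derivative
  have hderivF1 : ∀ x ∈ Ioo (0:ℝ) 1, HasDerivAt F1 (-(c^2 / ((a + A * x)^2 * (1 - x)))) x := by
    intro x hx
    obtain ⟨h0, h1⟩ := hx
    have hs : (0:ℝ) < 1 - x := by linarith
    have hPx : 0 < a + A * x := hP x ⟨h0.le, h1.le⟩
    have dlog2 : HasDerivAt (fun y => Real.log (a + A * y)) (A / (a + A * x)) x :=
      (hinner x).log hPx.ne'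
    have dq : HasDerivAt (fun y => A / (a + A * y))
        ((0 * (a + A * x) - A * A) / (a + A * x) ^ 2) x :=
      (hasDerivAt_const x A).div (hinner x) hPx.ne'
    have d2 : HasDerivAt (fun y => (1 - y) * (A / (a + A * y)))
        ((-1) * (A / (a + A * x)) + (1 - x) * ((0 * (a + A * x) - A * A) / (a + A * x) ^ 2)) x :=
      (hone x).mul dq
    have dlog3 : HasDerivAt (fun y => Real.log (1 - y)) ((-1) / (1 - x)) x :=
      (hone x).log hs.ne'
    have total := ((((hasDerivAt_const x (Real.log a)).sub dlog2).add d2).add dlog3).add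
      (hasDerivAt_const x (1:ℝ))
    have heq : (0 : ℝ) - A / (a + A * x) +
        ((-1) * (A / (a + A * x)) + (1 - x) * ((0 * (a + A * x) - A * A) / (a + A * x) ^ 2)) +
        (-1) / (1 - x) + 0 = -(c^2 / ((a + A * x)^2 * (1 - x))) := by
      have hc2 : c = A + a := by rw [hA_def]; ring
      rw [hc2]
      field_simp
      ring
    rw [hF1]
    exact heq ▸ total
  -- strict concavity on (0,1)
  have hconc : StrictConcaveOn ℝ (Ioo (0:ℝ) 1) F := by
    apply strictConcaveOn_of_deriv2_neg (convex_Ioo 0 1) (hcont.mono Ioo_subset_Icc_self)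
    intro x hx
    rw [isOpen_Ioo.interior_eq] at hx
    have hs : (0:ℝ) < 1 - x := by linarith [hx.2]
    have hPx : 0 < a + A * x := hP x ⟨hx.1.le, hx.2.le⟩
    have hev : deriv F =ᶠ[𝓝 x] F1 :=
      Filter.eventuallyEq_of_mem (isOpen_Ioo.mem_nhds hx) (fun y hy => (hderivF y hy).deriv)
    have : deriv (deriv F) x = -(c^2 / ((a + A * x)^2 * (1 - x))) := by
      rw [hev.deriv_eq]
      exact (hderivF1 x hx).deriv
    show deriv^[2] F x < 0
    have h2 : deriv^[2] F x = deriv (deriv F) x := by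
      simp [Function.iterate_succ, Function.iterate_zero]
    rw [h2, this]
    have : 0 < c^2 / ((a + A * x)^2 * (1 - x)) :=
      div_pos (pow_pos hc 2) (mul_pos (pow_pos hPx 2) hs)
    linarith
  -- existence of a maximizer on [0,1]
  obtain ⟨x₂, hx₂Icc, hmax⟩ := isCompact_Icc.exists_isMaxOn (⟨0, by norm_num⟩ :
    (Icc (0:ℝ) 1).Nonempty) hcont
  have hmax' : ∀ y ∈ Icc (0:ℝ) 1, F y ≤ F x₂ := fun y hy => hmax hy
  -- F at endpoints equals log a, and F(1/2) > log a
  have hF0 : F 0 = Real.log a := by simp [hF]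
  have hF1' : F 1 = Real.log a := by simp [hF]
  have hFhalf : Real.log a < F (1/2) := by
    have harg : a + A * (1/2) = (a + c) / 2 := by rw [hA_def]; ring
    have hlog : Real.log ((a + c)/2) = Real.log (a + c) - Real.log 2 :=
      Real.log_div (by linarith) (by norm_num)
    have hhalf : Real.log (1 - (1/2 : ℝ)) = -Real.log 2 := by
      rw [show (1:ℝ) - 1/2 = 2⁻¹ by norm_num, Real.log_inv]
    have hlt : Real.log a < Real.log (a + c) := Real.log_lt_log ha (by linarith)
    have hFh : F (1/2) = (1/2) * Real.log a + (1/2) * Real.log ((a+c)/2) + (1/2) * Real.log 2 := by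
      show (1/2:ℝ) * Real.log a + (1 - 1/2) * Real.log (a + A * (1/2))
          - (1 - 1/2) * Real.log (1 - (1/2:ℝ)) = _
      rw [harg, hhalf]; ring
    rw [hFh, hlog]; linarith
  have hx₂Ioo : x₂ ∈ Ioo (0:ℝ) 1 := by
    have h12 : F (1/2) ≤ F x₂ := hmax' (1/2) (by norm_num)
    constructor
    · rcases lt_or_eq_of_le hx₂Icc.1 with h | h
      · exact h
      · exfalso; rw [← h] at h12; rw [hF0] at h12; linarith
    · rcases lt_or_eq_of_le hx₂Icc.2 with h | h
      · exact h
      · exfalso; rw [h] at h12; rw [hF1'] at h12; linarith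
  -- strict maximality
  have hstrict : ∀ lam ∈ Ioo (0:ℝ) 1, lam ≠ x₂ → F lam < F x₂ := by
    intro lam hlam hne
    by_contra hcon
    push_neg at hcon
    have hle : F lam ≤ F x₂ := hmax' lam (Ioo_subset_Icc_self hlam)
    have heqF : F lam = F x₂ := le_antisymm hle hcon
    have := hconc.2 hlam hx₂Ioo hne (by norm_num : (0:ℝ) < 1/2)
      (by norm_num : (0:ℝ) < 1/2) (by norm_num)
    rw [heqF] at this
    have hmid : (1/2 : ℝ) • lam + (1/2 : ℝ) • x₂ ∈ Ioo (0:ℝ) 1 := by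
      constructor
      · simp only [smul_eq_mul]; nlinarith [hlam.1, hx₂Ioo.1]
      · simp only [smul_eq_mul]; nlinarith [hlam.2, hx₂Ioo.2]
    have := hmax' _ (Ioo_subset_Icc_self hmid)
    simp only [smul_eq_mul] at *
    linarith
  refine ⟨x₂, ⟨hx₂Ioo, fun lam hlam hne => ?_⟩, ?_⟩
  · rw [hFeq lam hlam, hFeq x₂ hx₂Ioo]
    exact hstrict lam hlam hne
  · rintro y ⟨hyIoo, hy⟩
    by_contra hne
    have h1 := hy x₂ hx₂Ioo (fun h => hne h.symm)
    rw [hFeq x₂ hx₂Ioo, hFeq y hyIoo] at h1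
    have h2 := hstrict y hyIoo hne
    linarith
end

section
/- Let a, m, c be real numbers with a > 0, m > 0, c > 0, set b = log(1+m), and define f₂ on (0,1) by f₂(λ) = λ·log(1+m) + (1−λ)·log(1 + m + c·λ/(1−λ)). Let λ₁ ∈ (0,1) be the unique solution of λ·(a+b) = f₂(λ), let λ₂ ∈ (0,1) be the unique maximizer of f₂ over (0,1), and set λ* = max{λ₁, λ₂}. Then for every λ ∈ (0,1), min{λ·(a+b), f₂(λ)} ≤ min{λ*·(a+b), f₂(λ*)}; that is, λ* maximizes the achievable rate R(λ) = min{λ·(a+b), f₂(λ)} over (0,1). -/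
lemma psi_anti (A x₁ x₂ : ℝ) (hx1 : 0 < x₁) (h12 : x₁ < x₂) (hu1 : 0 < A + x₁) :
    -Real.log (A + x₂) + x₂/(A + x₂) < -Real.log (A + x₁) + x₁/(A + x₁) := by
  have hu2 : 0 < A + x₂ := by linarith
  have hne : (A + x₁)/(A + x₂) ≠ 1 := by
    intro h
    have : A + x₁ = A + x₂ := by field_simp at h; linarith
    linarith
  have hpos : 0 < (A + x₁)/(A + x₂) := div_pos hu1 hu2
  have hlog := Real.log_lt_sub_one_of_pos hpos hne
  rw [Real.log_div (ne_of_gt hu1) (ne_of_gt hu2)] at hlog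
  have key : x₂/(A + x₂) - x₁/(A + x₁) + ((A + x₁)/(A + x₂) - 1)
      = x₁ * (x₁ - x₂) / ((A + x₁) * (A + x₂)) := by
    field_simp
    ring
  have hneg : x₁ * (x₁ - x₂) / ((A + x₁) * (A + x₂)) < 0 := by
    apply div_neg_of_neg_of_pos
    · nlinarith
    · positivity
  linarith

lemma hasDerivAt_F (M c : ℝ) (hM : 0 < M) (hc : 0 < c) (l : ℝ) (hl : l ∈ Set.Ioo (0:ℝ) 1) :
    HasDerivAt (fun x => x * Real.log M + (1 - x) * Real.log (M + c * x / (1 - x)))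
      (Real.log M - Real.log (M + c * l / (1 - l)) + c / ((1 - l) * (M + c * l / (1 - l)))) l := by
  obtain ⟨hl0, hl1⟩ := hl
  have hs : (0:ℝ) < 1 - l := by linarith
  have hu : 0 < M + c * l / (1 - l) := by positivity
  have h2 : HasDerivAt (fun x : ℝ => 1 - x) (-1) l := by
    simpa using (hasDerivAt_id l).const_sub 1
  have hq' : HasDerivAt (fun x : ℝ => c * x / (1 - x)) (c / (1 - l) ^ 2) l := by
    have := ((hasDerivAt_id l).const_mul c).div h2 (ne_of_gt hs)
    refine HasDerivAt.congr_deriv (by exact this) ?_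
    simp only [id]
    ring
  have hu' : HasDerivAt (fun x : ℝ => M + c * x / (1 - x)) (c / (1 - l) ^ 2) l :=
    hq'.const_add M
  have hlog : HasDerivAt (fun x : ℝ => Real.log (M + c * x / (1 - x)))
      (c / (1 - l) ^ 2 / (M + c * l / (1 - l))) l := hu'.log (ne_of_gt hu)
  have hprod : HasDerivAt (fun x : ℝ => (1 - x) * Real.log (M + c * x / (1 - x)))
      ((-1) * Real.log (M + c * l / (1 - l)) +
        (1 - l) * (c / (1 - l) ^ 2 / (M + c * l / (1 - l)))) l := h2.mul hlog
  have hlin : HasDerivAt (fun x : ℝ => x * Real.log M) (Real.log M) l := by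
    simpa using (hasDerivAt_id l).mul_const (Real.log M)
  refine HasDerivAt.congr_deriv (by exact hlin.add hprod) ?_
  rw [show (1 - l) * (c / (1 - l) ^ 2 / (M + c * l / (1 - l))) = c / ((1 - l) * (M + c * l / (1 - l))) by
    field_simp]
  ring

lemma D_anti (M c : ℝ) (hM : 1 < M) (hc : 0 < c) {s t : ℝ}
    (hs : s ∈ Set.Ioo (0:ℝ) 1) (ht : t ∈ Set.Ioo (0:ℝ) 1) (hst : s < t) :
    Real.log M - Real.log (M + c*t/(1-t)) + c/((1-t)*(M + c*t/(1-t))) <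
      Real.log M - Real.log (M + c*s/(1-s)) + c/((1-s)*(M + c*s/(1-s))) := by
  obtain ⟨hs0, hs1⟩ := hs
  obtain ⟨ht0, ht1⟩ := ht
  have hs' : (0:ℝ) < 1 - s := by linarith
  have ht' : (0:ℝ) < 1 - t := by linarith
  have hx1pos : 0 < c / (1 - s) := by positivity
  have hx12 : c / (1 - s) < c / (1 - t) := by
    apply div_lt_div_of_pos_left hc ht'
    linarith
  have heq1 : M + c*s/(1-s) = (M - c) + c/(1-s) := by
    field_simp; ring
  have heq2 : M + c*t/(1-t) = (M - c) + c/(1-t) := by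
    field_simp; ring
  have hu1 : 0 < (M - c) + c/(1-s) := by rw [← heq1]; positivity
  have key := psi_anti (M - c) (c/(1-s)) (c/(1-t)) hx1pos hx12 hu1
  rw [heq1, heq2, ← div_div, ← div_div]
  linarith

/-- Theorem 2 (ideal protocol, EA method): λ* = max{λ₁, λ₂} maximizes the
achievable rate R(λ) = min{λ·(a+b), f₂(λ)} over (0,1), with b = log(1+m),
where λ₁ is the unique solution of λ·(a+b) = f₂(λ) and λ₂ the unique
maximizer of f₂. -/
theorem ideal_EA_optimal_lambda (a m c : ℝ) (ha : 0 < a) (hm : 0 < m) (hc : 0 < c)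
    (b : ℝ) (hb : b = Real.log (1 + m))
    (f₂ : ℝ → ℝ)
    (hf₂ : ∀ lam : ℝ, f₂ lam = lam * Real.log (1 + m) +
      (1 - lam) * Real.log (1 + m + c * lam / (1 - lam)))
    (lam₁ lam₂ : ℝ)
    (hlam₁ : lam₁ ∈ Set.Ioo (0 : ℝ) 1)
    (hlam₁eq : lam₁ * (a + b) = f₂ lam₁)
    (hlam₁uniq : ∀ lam ∈ Set.Ioo (0 : ℝ) 1, lam * (a + b) = f₂ lam → lam = lam₁)
    (hlam₂ : lam₂ ∈ Set.Ioo (0 : ℝ) 1)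
    (hlam₂max : ∀ lam ∈ Set.Ioo (0 : ℝ) 1, lam ≠ lam₂ → f₂ lam < f₂ lam₂) :
    ∀ lam ∈ Set.Ioo (0 : ℝ) 1,
      min (lam * (a + b)) (f₂ lam) ≤
        min (max lam₁ lam₂ * (a + b)) (f₂ (max lam₁ lam₂)) := by
  have hM : (1:ℝ) < 1 + m := by linarith
  have hbpos : 0 < b := by rw [hb]; exact Real.log_pos hM
  have habpos : (0:ℝ) < a + b := by linarith
  -- derivative of f₂
  set D : ℝ → ℝ := fun l => Real.log (1+m) - Real.log ((1+m) + c*l/(1-l)) +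
      c/((1-l)*((1+m) + c*l/(1-l))) with hD
  have hF : ∀ l ∈ Set.Ioo (0:ℝ) 1, HasDerivAt f₂ (D l) l := by
    intro l hl
    have h := hasDerivAt_F (1+m) c (by linarith) hc l hl
    have : f₂ = fun x => x * Real.log (1+m) + (1 - x) * Real.log (1 + m + c * x / (1 - x)) :=
      funext hf₂
    rw [this]
    exact h
  -- derivative vanishes at lam₂
  have hloc : IsLocalMax f₂ lam₂ := by
    filter_upwards [isOpen_Ioo.mem_nhds hlam₂] with x hx
    rcases eq_or_ne x lam₂ with h | h
    · exact le_of_eq (by rw [h])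
    · exact (hlam₂max x hx h).le
  have hD2 : D lam₂ = 0 := hloc.hasDerivAt_eq_zero (hF lam₂ hlam₂)
  have hDneg : ∀ l ∈ Set.Ioo lam₂ 1, D l < 0 := by
    intro l hl
    have hlmem : l ∈ Set.Ioo (0:ℝ) 1 := ⟨lt_trans hlam₂.1 hl.1, hl.2⟩
    have h' : D l < D lam₂ := D_anti (1+m) c hM hc hlam₂ hlmem hl.1
    linarith [h', hD2]
  -- f₂ strictly decreasing on [lam₂, 1)
  have hanti : StrictAntiOn f₂ (Set.Ico lam₂ 1) := by
    apply strictAntiOn_of_deriv_neg (convex_Ico _ _)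
    · intro x hx
      exact (hF x ⟨lt_of_lt_of_le hlam₂.1 hx.1, hx.2⟩).continuousAt.continuousWithinAt
    · intro x hx
      rw [interior_Ico] at hx
      rw [(hF x ⟨lt_trans hlam₂.1 hx.1, hx.2⟩).deriv]
      exact hDneg x hx
  intro lam hlam
  rcases le_or_gt lam₂ lam₁ with h21 | h12
  · -- λ* = λ₁
    rw [max_eq_left h21, ← hlam₁eq, min_self]
    rcases le_or_gt lam lam₁ with h | h
    · exact le_trans (min_le_left _ _) (mul_le_mul_of_nonneg_right h habpos.le)
    · refine le_trans (min_le_right _ _) ?_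
      rw [hlam₁eq]
      exact (hanti ⟨h21, hlam₁.2⟩ ⟨le_trans h21 h.le, hlam.2⟩ h).le
  · -- λ* = λ₂
    rw [max_eq_right h12.le]
    rcases le_or_gt (f₂ lam₂) (lam₂ * (a + b)) with hA | hB
    · rw [min_eq_right hA]
      refine le_trans (min_le_right _ _) ?_
      rcases eq_or_ne lam lam₂ with h | h
      · rw [h]
      · exact (hlam₂max lam hlam h).le
    · -- impossible subcase: find second crossing
      exfalso
      set ε : ℝ := min (1/2) (a^2/(32*((1+m)+c))) with hε
      have hεpos : 0 < ε := lt_min (by norm_num) (by positivity)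
      have hεhalf : ε ≤ 1/2 := min_le_left _ _
      set t : ℝ := max (1-ε) ((1+lam₂)/2) with htdef
      have hlt2 : lam₂ < t :=
        lt_of_lt_of_le (by linarith [hlam₂.2]) (le_max_right _ _)
      have ht1 : t < 1 := max_lt (by linarith) (by linarith [hlam₂.2])
      have h1t : 1 - t ≤ ε := by
        have h1 : 1 - ε ≤ t := le_max_left _ _
        linarith
      have hthalf : 1/2 ≤ t := by linarith
      have ht0 : 0 < t := by linarith
      have ht' : 0 < 1 - t := by linarith
      -- key: f₂ t < t * (a + b)
      have hkey : f₂ t < t * (a + b) := by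
        rw [hf₂ t, hb]
        set z : ℝ := 1 + m + c * t / (1 - t) with hz
        have hzpos : 0 < z := by positivity
        have hsq : 0 < Real.sqrt z := Real.sqrt_pos.mpr hzpos
        have hlogz : Real.log z < 2 * Real.sqrt z := by
          have h1 := Real.log_le_sub_one_of_pos hsq
          have h2 : Real.log (Real.sqrt z) = Real.log z / 2 := Real.log_sqrt hzpos.le
          linarith
        have step1 : (1-t) * Real.log z < 2 * ((1-t) * Real.sqrt z) := by
          nlinarith
        have step2 : (1-t) * Real.sqrt z = Real.sqrt ((1-t)^2 * z) := by
          rw [Real.sqrt_mul (by positivity), Real.sqrt_sq ht'.le]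
        have heqz : (1-t)^2 * z = (1-t)^2 * (1+m) + c*t*(1-t) := by
          rw [hz]; field_simp
        have step3 : (1-t)^2 * z ≤ (1-t) * ((1+m) + c) := by
          rw [heqz]
          nlinarith [mul_nonneg (mul_nonneg ht'.le ht0.le) (show (0:ℝ) ≤ 1+m by linarith),
            mul_nonneg (mul_nonneg ht'.le ht'.le) hc.le]
        have step4 : (1-t) * ((1+m) + c) < a^2/16 := by
          have h1 : (1-t) * ((1+m)+c) ≤ ε * ((1+m)+c) :=
            mul_le_mul_of_nonneg_right h1t (by linarith)
          have h2 : ε * ((1+m)+c) ≤ a^2/32 := by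
            have h3 : ε ≤ a^2/(32*((1+m)+c)) := min_le_right _ _
            have h4 : (0:ℝ) < (1+m)+c := by linarith
            calc ε * ((1+m)+c) ≤ a^2/(32*((1+m)+c)) * ((1+m)+c) :=
                  mul_le_mul_of_nonneg_right h3 h4.le
              _ = a^2/32 := by field_simp
          have : (0:ℝ) < a^2 := by positivity
          linarith
        have step5 : Real.sqrt ((1-t)^2 * z) < a/4 := by
          have h1 : Real.sqrt ((1-t)^2 * z) < Real.sqrt (a^2/16) :=
            Real.sqrt_lt_sqrt (by positivity) (lt_of_le_of_lt step3 step4)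
          have h2 : Real.sqrt (a^2/16) = a/4 := by
            rw [show a^2/16 = (a/4)^2 by ring, Real.sqrt_sq (by positivity)]
          linarith
        have hfin : (1-t) * Real.log z < a/2 := by
          rw [step2] at step1
          linarith
        have hta : a/2 ≤ t * a := by
          have := mul_le_mul_of_nonneg_right hthalf ha.le
          linarith
        have hexp : t * (a + Real.log (1+m)) = t * a + t * Real.log (1+m) := by ring
        rw [hexp]
        linarith
      -- intermediate value to get second crossing
      set g : ℝ → ℝ := fun l => l * (a + b) - f₂ l with hgdef
      have hcont : ContinuousOn g (Set.Icc lam₂ t) := by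
        apply ContinuousOn.sub
        · exact (continuous_id.mul continuous_const).continuousOn
        · intro x hx
          exact (hF x ⟨lt_of_lt_of_le hlam₂.1 hx.1, lt_of_le_of_lt hx.2 ht1⟩).continuousAt.continuousWithinAt
      have hivt : Set.Ioo (g lam₂) (g t) ⊆ g '' Set.Ioo lam₂ t :=
        intermediate_value_Ioo hlt2.le hcont
      have h0mem : (0:ℝ) ∈ Set.Ioo (g lam₂) (g t) := by
        constructor
        · simp only [hgdef]; linarith
        · simp only [hgdef]; linarith
      obtain ⟨z, hzmem, hz0⟩ := hivt h0mem
      have hzIoo : z ∈ Set.Ioo (0:ℝ) 1 :=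
        ⟨lt_trans hlam₂.1 hzmem.1, lt_trans hzmem.2 ht1⟩
      have hzeq : z * (a + b) = f₂ z := by
        have : z * (a + b) - f₂ z = 0 := hz0
        linarith
      have := hlam₁uniq z hzIoo hzeq
      rw [this] at hzmem
      linarith [hzmem.1]
end

section
/- Let P > 0, H_SR > 0, H_SD > 0, H_RD > 0, σa2 ≥ 0, σb2 > 0, σD2 > 0 and η ∈ (0,1] be real numbers with H_SR·σD2 > H_SD·σa2, and set ρth = 1 − H_SD·σb2/(H_SR·σD2 − H_SD·σa2), b = log(1 + P·H_SD/σD2). Fix ρ ∈ (0, ρth) and set a′ = log(1 + (1−ρ)·P·H_SR/((1−ρ)·σa2 + σb2)) − b and c′ = η·ρ·H_SR·H_RD·P/σD2, and define f₁ on (0,1) by f₁(λ) = b + (1−λ)·log(1 + c′·λ/(1−λ)). Then a′ > 0 and c′ > 0; moreover, letting λ₁ ∈ (0,1) be the unique solution of λ·(a′+b) = f₁(λ) and λ₂ ∈ (0,1) the unique maximizer of f₁ over (0,1), the point λ* = max{λ₁, λ₂} maximizes min{λ·(a′+b), f₁(λ)} over λ ∈ (0,1). -/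
open Set Real Filter

private lemma aux_concave (c : ℝ) (hc : 0 < c) {x y t : ℝ}
    (hx : x ∈ Set.Ioo (0:ℝ) 1) (hy : y ∈ Set.Ioo (0:ℝ) 1)
    (ht0 : 0 < t) (ht1 : t < 1) :
    t * ((1-x) * Real.log (1 + c*x/(1-x))) + (1-t) * ((1-y) * Real.log (1 + c*y/(1-y)))
      ≤ (1 - (t*x+(1-t)*y)) * Real.log (1 + c*(t*x+(1-t)*y)/(1 - (t*x+(1-t)*y))) := by
  obtain ⟨hx0, hx1⟩ := hx
  obtain ⟨hy0, hy1⟩ := hy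
  have hs : 0 < 1 - x := by linarith
  have hu : 0 < 1 - y := by linarith
  have ht1' : 0 < 1 - t := by linarith
  set z := t*x+(1-t)*y with hz
  have hw : 0 < 1 - z := by rw [hz]; nlinarith [mul_pos ht0 hs, mul_pos ht1' hu]
  set w := 1 - z with hwdef
  have hA : (0:ℝ) < 1 + c*x/(1-x) := by positivity
  have hB : (0:ℝ) < 1 + c*y/(1-y) := by positivity
  have hα : 0 ≤ t*(1-x)/w := by positivity
  have hβ : 0 ≤ (1-t)*(1-y)/w := by positivity
  have hαβ : t*(1-x)/w + (1-t)*(1-y)/w = 1 := by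
    rw [← add_div, hwdef, hz, div_eq_one_iff_eq (by rw [← hz, ← hwdef]; exact hw.ne')]
    ring
  have hlog := (strictConcaveOn_log_Ioi.concaveOn).2 (Set.mem_Ioi.2 hA) (Set.mem_Ioi.2 hB) hα hβ hαβ
  rw [smul_eq_mul, smul_eq_mul, smul_eq_mul, smul_eq_mul] at hlog
  have hcomb : t*(1-x)/w * (1 + c*x/(1-x)) + (1-t)*(1-y)/w * (1 + c*y/(1-y)) = 1 + c*z/w := by
    have hw3 : 1 - (t*x+(1-t)*y) ≠ 0 := by rw [← hz, ← hwdef]; exact hw.ne'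
    rw [hwdef, hz]
    field_simp
    ring
  rw [hcomb] at hlog
  have h2 := mul_le_mul_of_nonneg_left hlog hw.le
  have hL : w*(t*(1-x)/w*Real.log (1+c*x/(1-x)) + (1-t)*(1-y)/w*Real.log (1+c*y/(1-y)))
      = t*((1-x)*Real.log (1+c*x/(1-x))) + (1-t)*((1-y)*Real.log (1+c*y/(1-y))) := by
    field_simp
  rw [hL] at h2
  exact h2

private lemma aux_xlogx : Tendsto (fun x : ℝ => (x:ℝ) * Real.log x) (nhdsWithin 0 (Set.Ioi 0)) (nhds 0) := by
  have h := tendsto_log_mul_rpow_nhdsGT_zero (r := 1) one_pos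
  simp only [Real.rpow_one] at h
  exact h.congr (fun x => mul_comm _ _)

private lemma aux_tendsto (c : ℝ) (hc : 0 < c) :
    Tendsto (fun z : ℝ => (1-z) * Real.log (1 + c*z/(1-z))) (nhdsWithin 1 (Set.Iio 1)) (nhds 0) := by
  have hmap : Tendsto (fun z : ℝ => 1 - z) (nhdsWithin 1 (Set.Iio 1)) (nhdsWithin 0 (Set.Ioi 0)) := by
    apply tendsto_nhdsWithin_of_tendsto_nhds_of_eventually_within
    · have h : Tendsto (fun z : ℝ => 1 - z) (nhds 1) (nhds 0) := by
        have hc1 : Continuous (fun z : ℝ => 1 - z) := by continuity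
        simpa using hc1.tendsto 1
      exact h.mono_left nhdsWithin_le_nhds
    · filter_upwards [self_mem_nhdsWithin] with z hz
      simp only [Set.mem_Iio] at hz
      simp only [Set.mem_Ioi]
      linarith
  have hz0 : Tendsto (fun z : ℝ => 1 - z) (nhdsWithin 1 (Set.Iio 1)) (nhds 0) :=
    hmap.mono_right nhdsWithin_le_nhds
  have h2 : Tendsto (fun z : ℝ => (1-z) * Real.log (1-z)) (nhdsWithin 1 (Set.Iio 1)) (nhds 0) :=
    aux_xlogx.comp hmap
  have h1 : Tendsto (fun z : ℝ => (1-z) * Real.log (1 - z + c*z)) (nhdsWithin 1 (Set.Iio 1)) (nhds 0) := by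
    have hin : Tendsto (fun z : ℝ => 1 - z + c*z) (nhds 1) (nhds c) := by
      have hc2 : Continuous (fun z : ℝ => 1 - z + c*z) := by continuity
      simpa using hc2.tendsto 1
    have hlog : Tendsto (fun z : ℝ => Real.log (1 - z + c*z)) (nhdsWithin 1 (Set.Iio 1)) (nhds (Real.log c)) :=
      (Real.continuousAt_log hc.ne').tendsto.comp (hin.mono_left nhdsWithin_le_nhds)
    simpa using hz0.mul hlog
  have heq : ∀ᶠ z in nhdsWithin 1 (Set.Iio 1),
      (1-z)*Real.log (1 - z + c*z) - (1-z)*Real.log (1-z) = (1-z) * Real.log (1 + c*z/(1-z)) := by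
    filter_upwards [Ioo_mem_nhdsLT_of_mem (by norm_num : (1:ℝ) ∈ Set.Ioc 0 1)] with z hz
    have h1z : (0:ℝ) < 1 - z := by linarith [hz.2]
    have h2z : (0:ℝ) < 1 - z + c*z := by nlinarith [hz.1, hz.2]
    rw [show 1 + c*z/(1-z) = (1 - z + c*z)/(1-z) by field_simp]
    rw [Real.log_div h2z.ne' h1z.ne']
    ring
  have := (h1.sub h2).congr' heq
  simpa using this

/-- Corollary 1 (PS protocol, IA method): for a fixed splitting ratio
ρ ∈ (0, ρth), one has a′ > 0 and c′ > 0, and λ* = max{λ₁, λ₂} maximizes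
min{λ·(a′+b), f₁(λ)} over (0,1), where λ₁ is the unique solution of
λ·(a′+b) = f₁(λ) and λ₂ the unique maximizer of f₁. -/
theorem ps_IA_optimal_lambda
    (P HSR HSD HRD σa2 σb2 σD2 η : ℝ)
    (hP : 0 < P) (hSR : 0 < HSR) (hSD : 0 < HSD) (hRD : 0 < HRD)
    (ha : 0 ≤ σa2) (hb' : 0 < σb2) (hD : 0 < σD2)
    (hη : η ∈ Set.Ioc (0 : ℝ) 1)
    (hgain : HSD * σa2 < HSR * σD2)
    (ρ : ℝ)
    (hρ : ρ ∈ Set.Ioo 0 (1 - HSD * σb2 / (HSR * σD2 - HSD * σa2)))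
    (b a' c' : ℝ)
    (hbdef : b = Real.log (1 + P * HSD / σD2))
    (ha'def : a' = Real.log (1 + (1 - ρ) * P * HSR / ((1 - ρ) * σa2 + σb2)) - b)
    (hc'def : c' = η * ρ * HSR * HRD * P / σD2)
    (f₁ : ℝ → ℝ)
    (hf₁ : ∀ lam : ℝ, f₁ lam = b + (1 - lam) * Real.log (1 + c' * lam / (1 - lam))) :
    0 < a' ∧ 0 < c' ∧
    ∀ lam₁ lam₂ : ℝ,
      lam₁ ∈ Set.Ioo (0 : ℝ) 1 →
      lam₁ * (a' + b) = f₁ lam₁ →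
      (∀ lam ∈ Set.Ioo (0 : ℝ) 1, lam * (a' + b) = f₁ lam → lam = lam₁) →
      lam₂ ∈ Set.Ioo (0 : ℝ) 1 →
      (∀ lam ∈ Set.Ioo (0 : ℝ) 1, lam ≠ lam₂ → f₁ lam < f₁ lam₂) →
      ∀ lam ∈ Set.Ioo (0 : ℝ) 1,
        min (lam * (a' + b)) (f₁ lam) ≤
          min (max lam₁ lam₂ * (a' + b)) (f₁ (max lam₁ lam₂)) := by
  obtain ⟨hρ0, hρ1⟩ := hρ
  obtain ⟨hη0, hη1⟩ := hη
  have hDpos : 0 < HSR * σD2 - HSD * σa2 := by linarith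
  have hρlt1 : ρ < 1 := by
    have h0 : 0 < HSD * σb2 / (HSR * σD2 - HSD * σa2) :=
      div_pos (by positivity) hDpos
    linarith
  have h1ρ : 0 < 1 - ρ := by linarith
  have hden : 0 < (1 - ρ) * σa2 + σb2 :=
    add_pos_of_nonneg_of_pos (mul_nonneg h1ρ.le ha) hb'
  have hbpos : 0 < b := by
    rw [hbdef]
    apply Real.log_pos
    have : 0 < P * HSD / σD2 := by positivity
    linarith
  have hfrac : HSD * σb2 < (1 - ρ) * (HSR * σD2 - HSD * σa2) := by
    have := (div_lt_iff₀ hDpos).1 (by linarith : HSD * σb2 / (HSR * σD2 - HSD * σa2) < 1 - ρ)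
    linarith
  have hkey : P * HSD / σD2 < (1 - ρ) * P * HSR / ((1 - ρ) * σa2 + σb2) := by
    rw [div_lt_div_iff₀ hD hden]
    nlinarith [mul_pos hP (sub_pos.2 hfrac)]
  have ha'pos : 0 < a' := by
    rw [ha'def, hbdef, sub_pos]
    exact Real.log_lt_log (by positivity) (by linarith)
  have hc'pos : 0 < c' := by rw [hc'def]; positivity
  have habpos : 0 < a' + b := by linarith
  have hfeq : f₁ = fun z => b + (1 - z) * Real.log (1 + c' * z / (1 - z)) := funext hf₁
  subst hfeq
  refine ⟨ha'pos, hc'pos, ?_⟩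
  intro lam₁ lam₂ hlam₁ heq₁ huniq hlam₂ hmax lam hlam
  -- continuity of f₁ on Ioo 0 1
  have hcont : ContinuousOn (fun z : ℝ => b + (1 - z) * Real.log (1 + c' * z / (1 - z)))
      (Set.Ioo (0:ℝ) 1) := by
    apply continuousOn_const.add
    apply (continuousOn_const.sub continuousOn_id).mul
    apply ContinuousOn.log
    · exact continuousOn_const.add ((continuousOn_const.mul continuousOn_id).div
        (continuousOn_const.sub continuousOn_id)
        (fun z hz => by
          simp only [Set.mem_Ioo, id] at hz ⊢
          intro h
          linarith [sub_eq_zero.1 h]))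
    · intro z hz
      simp only [Set.mem_Ioo] at hz
      have h1 : (0:ℝ) < 1 - z := by linarith
      have h2 : 0 < 1 + c' * z / (1 - z) :=
        add_pos_of_pos_of_nonneg one_pos
          (div_nonneg (mul_nonneg hc'pos.le hz.1.le) h1.le)
      exact h2.ne'
  -- f₁ ≥ b on Ioo 0 1
  have hfge : ∀ z ∈ Set.Ioo (0:ℝ) 1, b ≤ b + (1 - z) * Real.log (1 + c' * z / (1 - z)) := by
    intro z hz
    have h1 : (0:ℝ) < 1 - z := by linarith [hz.2]
    have h2 : (0:ℝ) ≤ c' * z / (1 - z) :=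
      div_nonneg (mul_nonneg hc'pos.le hz.1.le) h1.le
    have h3 : 0 ≤ (1 - z) * Real.log (1 + c' * z / (1 - z)) :=
      mul_nonneg h1.le (Real.log_nonneg (by linarith))
    linarith
  -- sign lemma: before lam₁, line is below f₁
  have hlt : ∀ z ∈ Set.Ioo (0:ℝ) 1, z < lam₁ →
      z * (a' + b) < b + (1 - z) * Real.log (1 + c' * z / (1 - z)) := by
    intro z hz hzlt
    by_contra hcon
    push_neg at hcon
    rcases eq_or_lt_of_le hcon with heqz | hltz
    · exact absurd (huniq z hz heqz.symm) (ne_of_lt hzlt)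
    · set z₀ : ℝ := min (z/2) (b/(2*(a'+b))) with hz₀def
      have hz₀pos : 0 < z₀ := lt_min (by linarith [hz.1]) (div_pos hbpos (by linarith))
      have hz₀z : z₀ < z := lt_of_le_of_lt (min_le_left _ _) (by linarith [hz.1])
      have hz₀mem : z₀ ∈ Set.Ioo (0:ℝ) 1 := ⟨hz₀pos, by linarith [hz.2]⟩
      have hsub : Set.Icc z₀ z ⊆ Set.Ioo (0:ℝ) 1 := fun w hw =>
        ⟨lt_of_lt_of_le hz₀pos hw.1, lt_of_le_of_lt hw.2 hz.2⟩
      have hcont' : ContinuousOn (fun w : ℝ => w * (a' + b) -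
          (b + (1 - w) * Real.log (1 + c' * w / (1 - w)))) (Set.Icc z₀ z) :=
        ((continuousOn_id.mul continuousOn_const).sub (hcont.mono hsub))
      have hval₀ : z₀ * (a' + b) - (b + (1 - z₀) * Real.log (1 + c' * z₀ / (1 - z₀))) < 0 := by
        have h1 : z₀ * (a' + b) ≤ b/2 := by
          have hmr : z₀ ≤ b/(2*(a'+b)) := min_le_right _ _
          have := mul_le_mul_of_nonneg_right hmr habpos.le
          have heq2 : (b/(2*(a'+b))) * (a' + b) = b/2 := by field_simp
          linarith [heq2 ▸ this]
        have h2 := hfge z₀ hz₀mem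
        linarith
      have hivt := intermediate_value_Ioo (le_of_lt hz₀z) hcont'
      obtain ⟨w, hwmem, hw0⟩ := hivt ⟨hval₀, by linarith⟩
      have hwIoo : w ∈ Set.Ioo (0:ℝ) 1 := hsub ⟨hwmem.1.le, hwmem.2.le⟩
      have hw0' : w * (a' + b) - (b + (1 - w) * Real.log (1 + c' * w / (1 - w))) = 0 := hw0
      have hwl := huniq w hwIoo (by linarith)
      have hwlt : w < lam₁ := lt_trans hwmem.2 hzlt
      rw [hwl] at hwlt
      exact lt_irrefl _ hwlt
  -- sign lemma: after lam₁, line is above f₁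
  have hgt : ∀ z ∈ Set.Ioo (0:ℝ) 1, lam₁ < z →
      b + (1 - z) * Real.log (1 + c' * z / (1 - z)) < z * (a' + b) := by
    intro z hz hzgt
    by_contra hcon
    push_neg at hcon
    rcases eq_or_lt_of_le hcon with heqz | hltz
    · exact absurd (huniq z hz heqz) (ne_of_gt hzgt)
    · have Ht : Tendsto (fun w : ℝ => w * (a' + b) -
          (b + (1 - w) * Real.log (1 + c' * w / (1 - w))))
          (nhdsWithin 1 (Set.Iio 1)) (nhds a') := by
        have hcm : Continuous (fun w : ℝ => w * (a' + b) - b) :=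
          (continuous_id.mul continuous_const).sub continuous_const
        have hl : Tendsto (fun w : ℝ => w * (a' + b) - b) (nhds (1:ℝ)) (nhds a') := by
          have := hcm.tendsto 1
          simpa using this
        have hcomb := (hl.mono_left nhdsWithin_le_nhds).sub (aux_tendsto c' hc'pos)
        simp only [sub_zero] at hcomb
        apply hcomb.congr
        intro w; ring
      have hev : ∀ᶠ w in nhdsWithin 1 (Set.Iio 1),
          0 < w * (a' + b) - (b + (1 - w) * Real.log (1 + c' * w / (1 - w))) :=
        Ht.eventually (eventually_gt_nhds ha'pos)
      have hmem : Set.Ioo z 1 ∈ nhdsWithin 1 (Set.Iio (1:ℝ)) :=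
        Ioo_mem_nhdsLT_of_mem ⟨hz.2, le_refl 1⟩
      obtain ⟨z', hz'pos, hz'mem⟩ := (hev.and (eventually_of_mem hmem (fun w hw => hw))).exists
      have hsub : Set.Icc z z' ⊆ Set.Ioo (0:ℝ) 1 := fun w hw =>
        ⟨lt_of_lt_of_le hz.1 hw.1, lt_of_le_of_lt hw.2 hz'mem.2⟩
      have hcont' : ContinuousOn (fun w : ℝ => w * (a' + b) -
          (b + (1 - w) * Real.log (1 + c' * w / (1 - w)))) (Set.Icc z z') :=
        ((continuousOn_id.mul continuousOn_const).sub (hcont.mono hsub))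
      have hivt := intermediate_value_Ioo (le_of_lt hz'mem.1) hcont'
      obtain ⟨w, hwmem, hw0⟩ := hivt ⟨by linarith, hz'pos⟩
      have hwIoo : w ∈ Set.Ioo (0:ℝ) 1 := hsub ⟨hwmem.1.le, hwmem.2.le⟩
      have hw0' : w * (a' + b) - (b + (1 - w) * Real.log (1 + c' * w / (1 - w))) = 0 := hw0
      have hwl := huniq w hwIoo (by linarith)
      have hwgt : lam₁ < w := lt_trans hzgt hwmem.1
      rw [hwl] at hwgt
      exact lt_irrefl _ hwgt
  -- decreasing after lam₁ when lam₂ ≤ lam₁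
  have hdec : ∀ z ∈ Set.Ioo (0:ℝ) 1, lam₁ < z → lam₂ ≤ lam₁ →
      b + (1 - z) * Real.log (1 + c' * z / (1 - z)) ≤
      b + (1 - lam₁) * Real.log (1 + c' * lam₁ / (1 - lam₁)) := by
    intro z hz hz1 h21
    rcases eq_or_lt_of_le h21 with heq2 | hlt2
    · have hne : z ≠ lam₂ := by rw [heq2]; exact (ne_of_gt hz1)
      have hm := hmax z hz hne
      simp only at hm
      rw [← heq2]
      exact hm.le
    · set t : ℝ := (z - lam₁)/(z - lam₂) with htdef
      have hz2 : 0 < z - lam₂ := by linarith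
      have ht0 : 0 < t := div_pos (by linarith) hz2
      have ht1 : t < 1 := (div_lt_one hz2).2 (by linarith)
      have hconv : t * lam₂ + (1 - t) * z = lam₁ := by
        rw [htdef]; field_simp; ring
      have hcc := aux_concave c' hc'pos hlam₂ hz ht0 ht1
      rw [hconv] at hcc
      have hmax'' := hmax lam₁ hlam₁ (ne_of_gt hlt2)
      simp only at hmax''
      set A := (1 - lam₂) * Real.log (1 + c' * lam₂ / (1 - lam₂)) with hAdef
      set B := (1 - z) * Real.log (1 + c' * z / (1 - z)) with hBdef
      set C := (1 - lam₁) * Real.log (1 + c' * lam₁ / (1 - lam₁)) with hCdef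
      -- hcc : t * A + (1 - t) * B ≤ C ;  hmax'' : b + C < b + A ; goal : b + B ≤ b + C
      have hCA : C < A := by linarith
      have h1 : t * C < t * A := (mul_lt_mul_iff_right₀ ht0).2 hCA
      have h2 : (1 - t) * B < (1 - t) * C := by linarith
      have h3 : B < C := (mul_lt_mul_iff_right₀ (by linarith : (0:ℝ) < 1 - t)).1 h2
      linarith
  -- main case analysis
  simp only at heq₁ ⊢
  rcases le_or_gt lam₂ lam₁ with hcase | hcase
  · rw [max_eq_left hcase, heq₁, min_self]
    rcases le_or_gt lam lam₁ with h | h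
    · refine le_trans (min_le_left _ _) ?_
      rw [← heq₁]
      exact mul_le_mul_of_nonneg_right h habpos.le
    · exact le_trans (min_le_right _ _) (hdec lam hlam h hcase)
  · rw [max_eq_right hcase.le]
    have hflt : b + (1 - lam₂) * Real.log (1 + c' * lam₂ / (1 - lam₂)) < lam₂ * (a' + b) :=
      hgt lam₂ hlam₂ hcase
    rw [min_eq_right hflt.le]
    rcases eq_or_ne lam lam₂ with rfl | hne
    · exact min_le_right _ _
    · exact le_trans (min_le_right _ _) (by simpa using (hmax lam hlam hne).le)
end

section
/- Let A, b, c be real numbers with A > 0, b > 0, c > 0. Then the set S = {(r, α₁, α₂, α₃) ∈ ℝ⁴ : α₁ ≥ 0, α₂ ≥ 0, α₃ > 0, α₁ + α₂ + α₃ = 1, r ≤ α₁·A, r ≤ (α₁+α₂)·b + α₃·(b + log(1 + c·α₂/α₃))} is a convex subset of ℝ⁴. -/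
/-- Perspective-type concavity inequality for `log`. -/
lemma log_persp_key (c : ℝ) (hc : 0 < c)
    (a2 b2 a3 b3 l m : ℝ) (ha2 : 0 ≤ a2) (hb2 : 0 ≤ b2) (ha3 : 0 < a3) (hb3 : 0 < b3)
    (hl : 0 < l) (hm : 0 < m) :
    l * a3 * Real.log (1 + c * a2 / a3) + m * b3 * Real.log (1 + c * b2 / b3)
      ≤ (l * a3 + m * b3) * Real.log (1 + c * (l * a2 + m * b2) / (l * a3 + m * b3)) := by
  set s : ℝ := l * a3 + m * b3 with hs
  have hspos : 0 < s := by positivity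
  have hu1 : (0:ℝ) < 1 + c * a2 / a3 := by positivity
  have hu2 : (0:ℝ) < 1 + c * b2 / b3 := by positivity
  have hw1 : 0 ≤ l * a3 / s := by positivity
  have hw2 : 0 ≤ m * b3 / s := by positivity
  have hwsum : l * a3 / s + m * b3 / s = 1 := by field_simp; exact hs.symm
  have hconc := (strictConcaveOn_log_Ioi.concaveOn).2
    (Set.mem_Ioi.mpr hu1) (Set.mem_Ioi.mpr hu2) hw1 hw2 hwsum
  simp only [smul_eq_mul] at hconc
  have heq : l * a3 / s * (1 + c * a2 / a3) + m * b3 / s * (1 + c * b2 / b3)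
      = 1 + c * (l * a2 + m * b2) / s := by
    field_simp
    ring
  rw [heq] at hconc
  have := mul_le_mul_of_nonneg_left hconc (le_of_lt hspos)
  calc l * a3 * Real.log (1 + c * a2 / a3) + m * b3 * Real.log (1 + c * b2 / b3)
      = s * (l * a3 / s * Real.log (1 + c * a2 / a3) + m * b3 / s * Real.log (1 + c * b2 / b3)) := by
        field_simp
    _ ≤ s * Real.log (1 + c * (l * a2 + m * b2) / s) := this
    _ = (l * a3 + m * b3) * Real.log (1 + c * (l * a2 + m * b2) / (l * a3 + m * b3)) := by rw [hs]

/-- Theorem 3 (TS protocol, IA method): the feasible set of the epigraph-form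
problem P3′ is convex. Points of ℝ⁴ are written (r, α₁, α₂, α₃). -/
theorem ts_IA_feasible_set_convex (A b c : ℝ) (hA : 0 < A) (hb : 0 < b) (hc : 0 < c) :
    Convex ℝ {p : ℝ × ℝ × ℝ × ℝ |
      0 ≤ p.2.1 ∧ 0 ≤ p.2.2.1 ∧ 0 < p.2.2.2 ∧
      p.2.1 + p.2.2.1 + p.2.2.2 = 1 ∧
      p.1 ≤ p.2.1 * A ∧
      p.1 ≤ (p.2.1 + p.2.2.1) * b +
        p.2.2.2 * (b + Real.log (1 + c * p.2.2.1 / p.2.2.2))} := by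
  intro p hp q hq l m hl hm hlm
  obtain ⟨hp1, hp2, hp3, hp4, hp5, hp6⟩ := hp
  obtain ⟨hq1, hq2, hq3, hq4, hq5, hq6⟩ := hq
  rcases eq_or_lt_of_le hl with hl0 | hlpos
  · have hm1 : m = 1 := by linarith
    simp only [← hl0, hm1, zero_smul, one_smul, zero_add]
    exact ⟨hq1, hq2, hq3, hq4, hq5, hq6⟩
  rcases eq_or_lt_of_le hm with hm0 | hmpos
  · have hl1 : l = 1 := by linarith
    simp only [← hm0, hl1, zero_smul, one_smul, add_zero]
    exact ⟨hp1, hp2, hp3, hp4, hp5, hp6⟩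
  simp only [Set.mem_setOf_eq, Prod.fst_add, Prod.snd_add, Prod.smul_fst, Prod.smul_snd,
    smul_eq_mul]
  have h3 : 0 < l * p.2.2.2 + m * q.2.2.2 := by positivity
  refine ⟨by positivity, by positivity, h3, by nlinarith, by nlinarith, ?_⟩
  have key := log_persp_key c hc p.2.2.1 q.2.2.1 p.2.2.2 q.2.2.2 l m hp2 hq2 hp3 hq3 hlpos hmpos
  nlinarith [mul_le_mul_of_nonneg_left hp6 (le_of_lt hlpos),
    mul_le_mul_of_nonneg_left hq6 (le_of_lt hmpos)]
end

section
/- Let A, m, c be real numbers with A > 0, m > 0, c > 0, and set b = log(1+m). Then the set S = {(r, α₁, α₂, α₃) ∈ ℝ⁴ : α₁ ≥ 0, α₂ ≥ 0, α₃ > 0, α₁ + α₂ + α₃ = 1, r ≤ α₁·A, r ≤ (α₁+α₂)·b + α₃·log(1 + m + c·α₂/α₃)} is a convex subset of ℝ⁴. -/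
/-- Key perspective inequality: t·x₃·log(1+m+c·x₂/x₃) + s·y₃·log(1+m+c·y₂/y₃)
    ≤ (t·x₃+s·y₃)·log(1+m+c·(t·x₂+s·y₂)/(t·x₃+s·y₃)). -/
lemma perspective_log_ineq (m c : ℝ) (hm : 0 < m) (hc : 0 < c)
    (x2 x3 y2 y3 t s : ℝ) (hx2 : 0 ≤ x2) (hx3 : 0 < x3) (hy2 : 0 ≤ y2) (hy3 : 0 < y3)
    (ht : 0 ≤ t) (hs : 0 ≤ s) (hts : t + s = 1) (hz3 : 0 < t * x3 + s * y3) :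
    t * (x3 * Real.log (1 + m + c * x2 / x3)) + s * (y3 * Real.log (1 + m + c * y2 / y3))
      ≤ (t * x3 + s * y3) * Real.log (1 + m + c * (t * x2 + s * y2) / (t * x3 + s * y3)) := by
  set z3 := t * x3 + s * y3 with hz3def
  have hconc : ConcaveOn ℝ (Set.Ioi (0:ℝ)) Real.log := StrictConcaveOn.concaveOn strictConcaveOn_log_Ioi
  have hax : (0:ℝ) < 1 + m + c * x2 / x3 := by positivity
  have hay : (0:ℝ) < 1 + m + c * y2 / y3 := by positivity
  have hw1 : 0 ≤ t * x3 / z3 := by positivity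
  have hw2 : 0 ≤ s * y3 / z3 := by positivity
  have hwsum : t * x3 / z3 + s * y3 / z3 = 1 := by field_simp; exact hz3def.symm
  have key := hconc.2 (Set.mem_Ioi.mpr hax) (Set.mem_Ioi.mpr hay) hw1 hw2 hwsum
  have harg : t * x3 / z3 * (1 + m + c * x2 / x3) + s * y3 / z3 * (1 + m + c * y2 / y3)
      = 1 + m + c * (t * x2 + s * y2) / z3 := by
    field_simp
    ring
  simp only [smul_eq_mul] at key
  rw [harg] at key
  have := mul_le_mul_of_nonneg_left key hz3.le
  calc t * (x3 * Real.log (1 + m + c * x2 / x3)) + s * (y3 * Real.log (1 + m + c * y2 / y3))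
      = z3 * (t * x3 / z3 * Real.log (1 + m + c * x2 / x3)
          + s * y3 / z3 * Real.log (1 + m + c * y2 / y3)) := by
        field_simp
    _ ≤ z3 * Real.log (1 + m + c * (t * x2 + s * y2) / z3) := this

/-- Theorem 3 (TS protocol, EA method): the feasible set of the epigraph-form
problem P3′ is convex. Points of ℝ⁴ are written (r, α₁, α₂, α₃),
with b = log(1+m). -/
theorem ts_EA_feasible_set_convex (A m c : ℝ) (hA : 0 < A) (hm : 0 < m) (hc : 0 < c)
    (b : ℝ) (hb : b = Real.log (1 + m)) :
    Convex ℝ {p : ℝ × ℝ × ℝ × ℝ |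
      0 ≤ p.2.1 ∧ 0 ≤ p.2.2.1 ∧ 0 < p.2.2.2 ∧
      p.2.1 + p.2.2.1 + p.2.2.2 = 1 ∧
      p.1 ≤ p.2.1 * A ∧
      p.1 ≤ (p.2.1 + p.2.2.1) * b +
        p.2.2.2 * Real.log (1 + m + c * p.2.2.1 / p.2.2.2)} := by
  rintro ⟨r, x1, x2, x3⟩ ⟨hx1, hx2, hx3, hxsum, hxA, hxL⟩
    ⟨r', y1, y2, y3⟩ ⟨hy1, hy2, hy3, hysum, hyA, hyL⟩ t s ht hs hts
  simp only [Set.mem_setOf_eq, Prod.smul_mk, Prod.mk_add_mk, smul_eq_mul] at *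
  have hz3 : 0 < t * x3 + s * y3 := by
    rcases ht.eq_or_lt with h | h
    · have : s = 1 := by linarith
      simp [← h, this, hy3]
    · exact add_pos_of_pos_of_nonneg (mul_pos h hx3) (mul_nonneg hs hy3.le)
  refine ⟨by positivity, by positivity, hz3, by linear_combination t*hxsum + s*hysum + hts, ?_, ?_⟩
  · have := add_le_add (mul_le_mul_of_nonneg_left hxA ht) (mul_le_mul_of_nonneg_left hyA hs)
    simpa [mul_assoc, add_mul] using this
  · have h1 := add_le_add (mul_le_mul_of_nonneg_left hxL ht) (mul_le_mul_of_nonneg_left hyL hs)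
    refine h1.trans ?_
    have h2 := perspective_log_ineq m c hm hc x2 x3 y2 y3 t s hx2 hx3 hy2 hy3 ht hs hts hz3
    nlinarith [h2]
end

section
/- Let A, b, c be real numbers with A > b > 0 and c > 0. For α = (α₁, α₂, α₃) in the simplex Δ = {α ∈ ℝ³ : α₁, α₂, α₃ ≥ 0, α₁+α₂+α₃ = 1}, define R(α) = min{α₁·A, (α₁+α₂)·b + α₃·(b + log(1 + c·α₂/α₃))} when α₃ > 0, and R(α) = min{α₁·A, (α₁+α₂)·b} when α₃ = 0 (the continuous extension). If α* = (α₁*, α₂*, α₃*) ∈ Δ maximizes R over Δ, then α₃* > 0 and the two branches are equal at α*: α₁*·A = (α₁*+α₂*)·b + α₃*·(b + log(1 + c·α₂*/α₃*)). -/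
/-- Lipschitz bound for `log (1 + ·)` on nonnegatives. -/
lemma log_one_add_lip {x y : ℝ} (hy : 0 ≤ y) (hxy : y ≤ x) :
    Real.log (1 + x) - Real.log (1 + y) ≤ x - y := by
  have h1 : (0:ℝ) < 1 + y := by linarith
  have h2 : (0:ℝ) < 1 + x := by linarith
  calc Real.log (1 + x) - Real.log (1 + y)
      = Real.log ((1 + x) / (1 + y)) := (Real.log_div h2.ne' h1.ne').symm
    _ ≤ (1 + x) / (1 + y) - 1 := Real.log_le_sub_one_of_pos (by positivity)
    _ = (x - y) / (1 + y) := by field_simp; ring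
    _ ≤ x - y := div_le_self (by linarith) (by linarith)

/-- Lemma 4 (TS protocol, IA method): at a maximizer α* of the rate
R(α) = min{α₁·A, (α₁+α₂)·b + α₃·(b + log(1 + c·α₂/α₃))} over the simplex
(with the continuous extension R = min{α₁·A, (α₁+α₂)·b} when α₃ = 0),
one has α₃* > 0 and the two branches of the min are equal. -/
theorem ts_IA_rate_balance (A b c : ℝ) (hAb : b < A) (hb : 0 < b) (hc : 0 < c)
    (R : ℝ × ℝ × ℝ → ℝ)
    (hR : ∀ α : ℝ × ℝ × ℝ,
      R α = min (α.1 * A)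
        ((α.1 + α.2.1) * b +
          (if 0 < α.2.2 then α.2.2 * (b + Real.log (1 + c * α.2.1 / α.2.2)) else 0)))
    (αs : ℝ × ℝ × ℝ)
    (hmem : 0 ≤ αs.1 ∧ 0 ≤ αs.2.1 ∧ 0 ≤ αs.2.2 ∧ αs.1 + αs.2.1 + αs.2.2 = 1)
    (hopt : ∀ α : ℝ × ℝ × ℝ,
      0 ≤ α.1 → 0 ≤ α.2.1 → 0 ≤ α.2.2 → α.1 + α.2.1 + α.2.2 = 1 → R α ≤ R αs) :
    0 < αs.2.2 ∧
    αs.1 * A =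
      (αs.1 + αs.2.1) * b +
        αs.2.2 * (b + Real.log (1 + c * αs.2.1 / αs.2.2)) := by
  obtain ⟨a1, a2, a3⟩ := αs
  obtain ⟨h1, h2, h3, hsum⟩ := hmem
  replace h1 : 0 ≤ a1 := h1
  replace h2 : 0 ≤ a2 := h2
  replace h3 : 0 ≤ a3 := h3
  replace hsum : a1 + a2 + a3 = 1 := hsum
  show 0 < a3 ∧ a1 * A = (a1 + a2) * b + a3 * (b + Real.log (1 + c * a2 / a3))
  have hA : (0:ℝ) < A := lt_trans hb hAb
  -- the candidate point showing the optimum exceeds b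
  set t : ℝ := b / A with htdef
  have ht0 : 0 < t := div_pos hb hA
  have ht1 : t < 1 := (div_lt_one hA).mpr hAb
  have htA : t * A = b := div_mul_cancel₀ b hA.ne'
  have hq : (0:ℝ) < (1 - t) / 4 := by linarith
  have hcand : b < R (a1, a2, a3) := by
    have hfeas := hopt ((1 + t) / 2, (1 - t) / 4, (1 - t) / 4)
      (by show (0:ℝ) ≤ (1 + t) / 2; linarith) (le_of_lt hq) (le_of_lt hq)
      (by show (1 + t) / 2 + (1 - t) / 4 + (1 - t) / 4 = 1; ring)
    have hRc := hR ((1 + t) / 2, (1 - t) / 4, (1 - t) / 4)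
    rw [if_pos hq, mul_div_assoc, div_self hq.ne', mul_one] at hRc
    have hlog : 0 < Real.log (1 + c) := Real.log_pos (by linarith)
    have hb1 : b < (1 + t) / 2 * A := by nlinarith
    have hb2 : b < ((1 + t) / 2 + (1 - t) / 4) * b
        + (1 - t) / 4 * (b + Real.log (1 + c)) := by nlinarith
    have : b < R ((1 + t) / 2, (1 - t) / 4, (1 - t) / 4) := by
      rw [hRc]; exact lt_min hb1 hb2
    linarith
  -- step 1 : a3 > 0
  have ha3 : 0 < a3 := by
    rcases lt_or_eq_of_le h3 with h | h
    · exact h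
    · exfalso
      have hRs := hR (a1, a2, a3)
      rw [if_neg (by rw [← h]; exact lt_irrefl 0)] at hRs
      have hle : R (a1, a2, a3) ≤ (a1 + a2) * b + 0 := hRs ▸ min_le_right _ _
      have hab : a1 + a2 = 1 := by linarith
      rw [hab, one_mul, add_zero] at hle
      linarith
  refine ⟨ha3, ?_⟩
  -- the two branches
  obtain ⟨L, hLdef⟩ : ∃ x : ℝ, x = a1 * A := ⟨_, rfl⟩
  obtain ⟨M, hMdef⟩ : ∃ x : ℝ,
      x = (a1 + a2) * b + a3 * (b + Real.log (1 + c * a2 / a3)) := ⟨_, rfl⟩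
  have hRs : R (a1, a2, a3) = min L M := by
    have h := hR (a1, a2, a3); rw [if_pos ha3] at h; rw [hLdef, hMdef]; exact h
  have hRM : R (a1, a2, a3) ≤ M := hRs ▸ min_le_right _ _
  have hRL : R (a1, a2, a3) ≤ L := hRs ▸ min_le_left _ _
  -- a2 > 0 and a1 > 0
  have ha2 : 0 < a2 := by
    rcases lt_or_eq_of_le h2 with h | h
    · exact h
    · exfalso
      have hlog0 : Real.log (1 + c * a2 / a3) = 0 := by rw [← h]; norm_num
      have hab : a1 + a3 = 1 := by linarith
      have hM : M = b := by
        rw [hMdef, hlog0, ← h]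
        linear_combination b * hab
      rw [hM] at hRM; linarith
  have ha1 : 0 < a1 := by
    have hbL : b < a1 * A := by rw [← hLdef]; linarith
    nlinarith
  rcases lt_trichotomy L M with hLM | hLM | hLM
  · -- L < M : move δ from a2 to a1; rate strictly increases, contradiction
    exfalso
    obtain ⟨δ, hδdef⟩ : ∃ x : ℝ, x = min a2 ((M - L) / (A + c)) / 2 := ⟨_, rfl⟩
    have hδ0 : 0 < δ := by
      rw [hδdef]; exact half_pos (lt_min ha2 (div_pos (by linarith) (by linarith)))
    have hδa2 : δ ≤ a2 / 2 := by
      rw [hδdef]; have := min_le_left a2 ((M - L) / (A + c)); linarith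
    have hδML : δ * (A + c) < M - L := by
      have hpos : (0:ℝ) < A + c := by linarith
      have hm1 : δ ≤ ((M - L) / (A + c)) / 2 := by
        rw [hδdef]; have := min_le_right a2 ((M - L) / (A + c)); linarith
      have hm3 := mul_le_mul_of_nonneg_right hm1 hpos.le
      have hm4 : (M - L) / (A + c) / 2 * (A + c) = (M - L) / 2 := by
        field_simp
      rw [hm4] at hm3; linarith
    have hfeas := hopt (a1 + δ, a2 - δ, a3)
      (by show (0:ℝ) ≤ a1 + δ; linarith) (by show (0:ℝ) ≤ a2 - δ; linarith)
      h3 (by show a1 + δ + (a2 - δ) + a3 = 1; linarith)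
    have hRc := hR (a1 + δ, a2 - δ, a3)
    rw [if_pos ha3] at hRc
    -- bound the new second branch from below
    have hy0 : 0 ≤ c * (a2 - δ) / a3 :=
      div_nonneg (mul_nonneg hc.le (by linarith)) ha3.le
    have hxy : c * (a2 - δ) / a3 ≤ c * a2 / a3 := by
      gcongr
      linarith
    have hlip := log_one_add_lip hy0 hxy
    have heq : c * a2 / a3 - c * (a2 - δ) / a3 = c * δ / a3 := by ring
    have hkey : a3 * (Real.log (1 + c * a2 / a3)
        - Real.log (1 + c * (a2 - δ) / a3)) ≤ c * δ := by
      have h7 : Real.log (1 + c * a2 / a3) - Real.log (1 + c * (a2 - δ) / a3)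
          ≤ c * δ / a3 := by rw [← heq]; exact hlip
      have h8 : a3 * (c * δ / a3) = c * δ := by field_simp
      linarith [mul_le_mul_of_nonneg_left h7 (le_of_lt ha3)]
    have hsimp : a1 + δ + (a2 - δ) = a1 + a2 := by ring
    have hL1 : L < (a1 + δ) * A := by rw [hLdef]; linarith [mul_pos hδ0 hA]
    have hM1 : L < (a1 + δ + (a2 - δ)) * b
        + a3 * (b + Real.log (1 + c * (a2 - δ) / a3)) := by
      rw [hsimp]
      linarith [hkey, hδML, hMdef, mul_nonneg hδ0.le hA.le]
    have hlt : L < R (a1 + δ, a2 - δ, a3) := by rw [hRc]; exact lt_min hL1 hM1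
    have hRold : R (a1, a2, a3) = L := by rw [hRs, min_eq_left (le_of_lt hLM)]
    rw [hRold] at hfeas; linarith
  · rw [hLdef, hMdef] at hLM; exact hLM
  · -- M < L : move δ from a1 to a2; the log strictly increases, contradiction
    exfalso
    obtain ⟨δ, hδdef⟩ : ∃ x : ℝ, x = min a1 ((L - M) / A) / 2 := ⟨_, rfl⟩
    have hδ0 : 0 < δ := by
      rw [hδdef]; exact half_pos (lt_min ha1 (div_pos (by linarith) hA))
    have hδa1 : δ ≤ a1 / 2 := by
      rw [hδdef]; have := min_le_left a1 ((L - M) / A); linarith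
    have hδLM : δ * A < L - M := by
      have hm1 : δ ≤ ((L - M) / A) / 2 := by
        rw [hδdef]; have := min_le_right a1 ((L - M) / A); linarith
      have hm3 := mul_le_mul_of_nonneg_right hm1 hA.le
      have hm4 : (L - M) / A / 2 * A = (L - M) / 2 := by
        field_simp
      rw [hm4] at hm3; linarith
    have hfeas := hopt (a1 - δ, a2 + δ, a3)
      (by show (0:ℝ) ≤ a1 - δ; linarith) (by show (0:ℝ) ≤ a2 + δ; linarith)
      h3 (by show a1 - δ + (a2 + δ) + a3 = 1; linarith)
    have hRc := hR (a1 - δ, a2 + δ, a3)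
    rw [if_pos ha3] at hRc
    have hloglt : Real.log (1 + c * a2 / a3) < Real.log (1 + c * (a2 + δ) / a3) := by
      apply Real.log_lt_log (by positivity)
      gcongr
      linarith
    have hL1 : M < (a1 - δ) * A := by rw [hLdef] at hδLM; linarith
    have hM1 : M < (a1 - δ + (a2 + δ)) * b
        + a3 * (b + Real.log (1 + c * (a2 + δ) / a3)) := by
      have hsimp : a1 - δ + (a2 + δ) = a1 + a2 := by ring
      rw [hsimp, hMdef]
      linarith [mul_lt_mul_of_pos_left hloglt ha3]
    have hlt : M < R (a1 - δ, a2 + δ, a3) := by rw [hRc]; exact lt_min hL1 hM1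
    have hRold : R (a1, a2, a3) = M := by rw [hRs, min_eq_right (le_of_lt hLM)]
    rw [hRold] at hfeas; linarith
end
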